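/- arXiv:1710.04568 — 7 statements merged into one kernel-verified Lean document; each statement's English description precedes it below -/
import Mathlib

section
/- Let O be the ring of integers of a finite extension of Q_p with uniformizer π, let Λ = O[[T]], and let P = (T − c) be a height-one prime of Λ generated by a linear distinguished polynomial, with c ∈ πO. Let Y be a finitely generated torsion Λ-module and C a non-negative integer with Fitt_{Λ_P, i}(Y_P) = P^C Λ_P. For each n > 0 set P_n = (T − c − π^n) and define C(n) by Fitt_{O,i}(Y ⊗_Λ Λ/P_n) = π^{C(n)} O. Then limsup_{n→∞} |C(n) − C·n| < ∞. -/
/-!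
Write `F = Fitt_i(Y)` and `p = T - c`. As `p` is prime, `F_P = P^C Λ_P` gives `F ⊆ (p^C)` and
`s p^C ∈ F` for some `s ∉ (p)`. Division by `p` gives `s = p q + b` with a constant `b ≠ 0`, say
of valuation `k`. A specialization `e` killing `T - c - π^n` need not be `O`-linear, but `e ∘ C`
is a surjective endomorphism of the DVR `O`, so it preserves valuations. Hence `e p` has
valuation `n`, and for `n > k` the element `e s = (e p)(e q) + e (C b)` has valuation `k`.
Therefore `(π^{nC}) ⊇ e(F) ∋ e(s p^C)`, which has valuation `nC + k`, and
`nC ≤ C(n) ≤ nC + k`.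
-/
/-- The `i`-th Fitting ideal of an arbitrary `R`-module `M`: the ideal generated, over all
finite generating families `g : R^n ↠ M`, by the `(n-i) × (n-i)` minors of matrices whose
columns are relations between the generators.  For finitely presented modules this agrees
with the Fitting ideal computed from any presentation matrix. -/
noncomputable def fittingIdeal (R M : Type*) [CommRing R] [AddCommGroup M] [Module R M]
    (i : ℕ) : Ideal R :=
  ⨆ (n : ℕ) (g : (Fin n → R) →ₗ[R] M) (_ : Function.Surjective g),
    Ideal.span {x | ∃ (v : Fin (n - i) → Fin n → R) (c : Fin (n - i) → Fin n),
      (∀ a, g (v a) = 0) ∧ x = Matrix.det (Matrix.of fun a b => v a (c b))}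

open PowerSeries IsLocalRing

theorem PowerSeries.exists_eq_X_sub_C_mul_add_C {A : Type*} [CommRing A] [IsLocalRing A]
    [IsAdicComplete (maximalIdeal A) A] {a : A} (ha : a ∈ maximalIdeal A) (f : A⟦X⟧) :
    ∃ (q : A⟦X⟧) (r : A), f = (X - C a) * q + C r := by
  have hmap : (X - C a).map (Ideal.Quotient.mk (maximalIdeal A)) = X := by
    simp [Ideal.Quotient.eq_zero_iff_mem.mpr ha]
  obtain ⟨q, r, hdeg, hf⟩ := f.exists_isWeierstrassDivision (g := X - C a)
    (by simp [(residue_eq_zero_iff a).mpr ha, X_ne_zero])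
  rw [hmap, order_X, ENat.toNat_one, Nat.cast_one] at hdeg
  refine ⟨q, r.coeff 0, ?_⟩
  rw [hf, Polynomial.eq_C_of_degree_le_zero (Order.le_of_lt_succ hdeg), Polynomial.coe_C,
    Polynomial.coeff_C_zero]

theorem PowerSeries.surjective_comp_C_of_map_X_sub_C_eq_zero {A S : Type*} [CommRing A]
    [IsLocalRing A] [IsAdicComplete (maximalIdeal A) A] [CommRing S] {e : A⟦X⟧ →+* S}
    (he : Function.Surjective e) {a : A} (ha : a ∈ maximalIdeal A) (hea : e (X - C a) = 0) :
    Function.Surjective (e.comp C) := by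
  intro y
  obtain ⟨f, rfl⟩ := he y
  obtain ⟨q, r, rfl⟩ := exists_eq_X_sub_C_mul_add_C ha f
  exact ⟨r, by simp [hea]⟩

theorem IsDiscreteValuationRing.associated_map_of_surjective {O : Type*} [CommRing O]
    [IsDomain O] [IsDiscreteValuationRing O] {σ : O →+* O} (hσ : Function.Surjective σ)
    (x : O) : Associated (σ x) x := by
  obtain ⟨ϖ, hϖ⟩ := exists_irreducible O
  have hσϖ : Associated (σ ϖ) ϖ := by
    rw [← Ideal.span_singleton_eq_span_singleton, ← Set.image_singleton, ← Ideal.map_span,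
      ← (irreducible_iff_uniformizer ϖ).mp hϖ, map_maximalIdeal_of_surjective σ hσ]
  obtain rfl | hx := eq_or_ne x 0
  · rw [map_zero]
  obtain ⟨n, u, rfl⟩ := eq_unit_mul_pow_irreducible hx hϖ
  rw [map_mul, map_pow, associated_isUnit_mul_left_iff (u.isUnit.map σ),
    associated_isUnit_mul_right_iff u.isUnit]
  exact hσϖ.pow_pow

theorem IsLocalRing.associated_add_of_pow_succ_dvd {R : Type*} [CommRing R] [IsLocalRing R]
    {π x y : R} {k : ℕ} (hπ : π ∈ maximalIdeal R) (hx : Associated x (π ^ k))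
    (hy : π ^ (k + 1) ∣ y) : Associated (x + y) (π ^ k) := by
  obtain ⟨u, rfl⟩ := hx.symm
  obtain ⟨t, rfl⟩ := hy
  have hunit : IsUnit ((u : R) + π * t) := by
    by_contra h
    have hu := sub_mem ((mem_maximalIdeal _).mpr h) (Ideal.mul_mem_right t _ hπ)
    rw [add_sub_cancel_right] at hu
    exact (mem_maximalIdeal _).mp hu u.isUnit
  rw [pow_succ, mul_assoc, ← mul_add, associated_mul_isUnit_left_iff hunit]

section Specialization

variable {O : Type*} [CommRing O] [IsDomain O] [IsDiscreteValuationRing O]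
  [IsAdicComplete (maximalIdeal O) O] {e : O⟦X⟧ →+* O}

theorem associated_map_C_of_map_X_sub_C_eq_zero (he : Function.Surjective e) {a : O}
    (ha : a ∈ maximalIdeal O) (hea : e (X - C a) = 0) (b : O) : Associated (e (C b)) b :=
  IsDiscreteValuationRing.associated_map_of_surjective
    (surjective_comp_C_of_map_X_sub_C_eq_zero he ha hea) b

theorem associated_map_X_sub_C_of_map_X_sub_C_eq_zero (he : Function.Surjective e) {a : O}
    (ha : a ∈ maximalIdeal O) (hea : e (X - C a) = 0) (c : O) :
    Associated (e (X - C c)) (a - c) := by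
  rw [show X - C c = (X - C a) + C (a - c) by rw [map_sub]; ring, map_add, hea, zero_add]
  exact associated_map_C_of_map_X_sub_C_eq_zero he ha hea (a - c)

end Specialization

section Localization

variable {R S : Type*} [CommRing R] [CommRing S] [Algebra R S] {p : R}
  [(Ideal.span {p}).IsPrime] [IsLocalization.AtPrime S (Ideal.span {p})] {I : Ideal R} {m : ℕ}

theorem le_span_pow_of_map_eq_pow [IsDomain R] (hp : p ≠ 0)
    (h : I.map (algebraMap R S) = (Ideal.span {p}).map (algebraMap R S) ^ m) :
    I ≤ Ideal.span {p ^ m} := by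
  have hprime : Prime p := (Ideal.span_singleton_prime hp).mp ‹_›
  intro x hx
  have hx' : algebraMap R S x ∈ (Ideal.span {p ^ m}).map (algebraMap R S) := by
    rw [← Ideal.span_singleton_pow, Ideal.map_pow, ← h]
    exact Ideal.mem_map_of_mem _ hx
  obtain ⟨s, hs, hsx⟩ :=
    (IsLocalization.algebraMap_mem_map_algebraMap_iff (Ideal.span {p}).primeCompl _ _ _).mp hx'
  rw [Ideal.mem_span_singleton] at hsx ⊢
  exact hprime.pow_dvd_of_dvd_mul_left m (fun hps => hs (Ideal.mem_span_singleton.mpr hps)) hsx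

theorem exists_mul_pow_mem_of_map_eq_pow
    (h : I.map (algebraMap R S) = (Ideal.span {p}).map (algebraMap R S) ^ m) :
    ∃ s ∉ Ideal.span {p}, s * p ^ m ∈ I := by
  have hpC : algebraMap R S (p ^ m) ∈ I.map (algebraMap R S) := by
    rw [h, ← Ideal.map_pow, Ideal.span_singleton_pow]
    exact Ideal.mem_map_of_mem _ (Ideal.mem_span_singleton_self _)
  exact (IsLocalization.algebraMap_mem_map_algebraMap_iff (Ideal.span {p}).primeCompl _ _ _).mp hpC

end Localization

theorem le_and_le_of_map_eq_span_pow {R O : Type*} [CommRing R] [CommRing O] [IsDomain O]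
    {π : O} (hπ : Irreducible π) {e : R →+* O} {F : Ideal R} {N : ℕ}
    (hF : F.map e = Ideal.span {π ^ N}) {g x : R} (hg : F ≤ Ideal.span {g}) (hx : x ∈ F)
    {a b : ℕ} (hga : Associated (e g) (π ^ a)) (hxb : Associated (e x) (π ^ b)) :
    a ≤ N ∧ N ≤ b := by
  have hgN : e g ∣ π ^ N := by
    rw [← Ideal.mem_span_singleton, ← Set.image_singleton, ← Ideal.map_span]
    exact Ideal.map_mono hg (hF ▸ Ideal.mem_span_singleton_self _)
  have hNx : π ^ N ∣ e x := Ideal.mem_span_singleton.mp (hF ▸ Ideal.mem_map_of_mem e hx)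
  rw [← pow_dvd_pow_iff hπ.ne_zero hπ.not_isUnit,
    ← pow_dvd_pow_iff hπ.ne_zero hπ.not_isUnit]
  exact ⟨hga.symm.dvd.trans hgN, hNx.trans hxb.dvd⟩

theorem mul_le_and_le_add_of_map_eq_span_pow {O : Type*} [CommRing O] [IsDomain O]
    [IsDiscreteValuationRing O] [IsAdicComplete (maximalIdeal O) O] {π : O} (hπ : Irreducible π)
    {c : O} (hc : c ∈ maximalIdeal O) {F : Ideal O⟦X⟧} {m : ℕ}
    (hF : F ≤ Ideal.span {(X - C c) ^ m}) {q : O⟦X⟧} {b : O} {k : ℕ} (hb : Associated b (π ^ k))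
    (hsF : ((X - C c) * q + C b) * (X - C c) ^ m ∈ F) {e : O⟦X⟧ →+* O}
    (he : Function.Surjective e) {n N : ℕ} (hkn : k < n) (hea : e (X - C (c + π ^ n)) = 0)
    (heF : F.map e = Ideal.span {π ^ N}) : n * m ≤ N ∧ N ≤ k + n * m := by
  have hπm : π ∈ maximalIdeal O := (mem_maximalIdeal π).mpr hπ.not_isUnit
  have ha : c + π ^ n ∈ maximalIdeal O := add_mem hc (Ideal.pow_mem_of_mem _ hπm n (by omega))
  have hep : Associated (e (X - C c)) (π ^ n) := by
    simpa using associated_map_X_sub_C_of_map_X_sub_C_eq_zero he ha hea c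
  have hes : Associated (e ((X - C c) * q + C b)) (π ^ k) := by
    rw [map_add, add_comm, map_mul]
    exact associated_add_of_pow_succ_dvd hπm
      ((associated_map_C_of_map_X_sub_C_eq_zero he ha hea b).trans hb)
      (((pow_dvd_pow π hkn).trans hep.symm.dvd).mul_right _)
  refine le_and_le_of_map_eq_span_pow hπ heF hF hsF ?_ ?_
  · rw [map_pow, pow_mul]
    exact hep.pow_pow
  · rw [map_mul, map_pow, pow_add, pow_mul]
    exact hes.mul_mul hep.pow_pow

theorem fitt_specialization_asymptotic_general
    {O : Type*} [CommRing O] [IsDomain O] [IsDiscreteValuationRing O]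
    [IsAdicComplete (IsLocalRing.maximalIdeal O) O]
    (π : O) (hπ : Irreducible π) (c : O) (hc : c ∈ Ideal.span {π})
    (Y : Type*) [AddCommGroup Y] [Module (PowerSeries O) Y]
    (i : ℕ)
    [hP : (Ideal.span {PowerSeries.X - PowerSeries.C c}).IsPrime]
    (C : ℕ)
    (hC : Ideal.map (algebraMap (PowerSeries O)
          (Localization.AtPrime (Ideal.span {PowerSeries.X - PowerSeries.C c})))
          (fittingIdeal (PowerSeries O) Y i)
        = (Ideal.map (algebraMap (PowerSeries O)
            (Localization.AtPrime (Ideal.span {PowerSeries.X - PowerSeries.C c})))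
            (Ideal.span {PowerSeries.X - PowerSeries.C c})) ^ C)
    (ev : ℕ → PowerSeries O →+* O)
    (hev : ∀ n : ℕ, 0 < n → Function.Surjective (ev n) ∧
      RingHom.ker (ev n) = Ideal.span {PowerSeries.X - PowerSeries.C (c + π ^ n)})
    (Cn : ℕ → ℕ)
    (hCn : ∀ n : ℕ, 0 < n →
      Ideal.map (ev n) (fittingIdeal (PowerSeries O) Y i) = Ideal.span {π ^ Cn n}) :
    ∃ B : ℤ, ∀ n : ℕ, 0 < n → |(Cn n : ℤ) - (C : ℤ) * n| ≤ B := by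
  have hmax : maximalIdeal O = Ideal.span {π} :=
    (IsDiscreteValuationRing.irreducible_iff_uniformizer π).mp hπ
  have hp0 : X - PowerSeries.C c ≠ 0 := fun h => by simpa using congrArg (coeff 1) h
  obtain ⟨s, hsP, hsF⟩ := exists_mul_pow_mem_of_map_eq_pow hC
  obtain ⟨q, b, rfl⟩ := exists_eq_X_sub_C_mul_add_C (hmax ▸ hc) s
  have hb : b ≠ 0 := by
    rintro rfl
    exact hsP (Ideal.mem_span_singleton.mpr ⟨q, by simp⟩)
  obtain ⟨k, u, rfl⟩ := IsDiscreteValuationRing.eq_unit_mul_pow_irreducible hb hπ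
  have bound : ∀ n, k < n → |(Cn n : ℤ) - C * n| ≤ k := by
    intro n hkn
    obtain ⟨hsurj, hker⟩ := hev n (by omega)
    have hea : ev n (X - PowerSeries.C (c + π ^ n)) = 0 := by
      rw [← RingHom.mem_ker, hker]
      exact Ideal.mem_span_singleton_self _
    obtain ⟨hlow, hup⟩ := mul_le_and_le_add_of_map_eq_span_pow hπ (hmax ▸ hc)
      (le_span_pow_of_map_eq_pow hp0 hC) (associated_unit_mul_left _ _ u.isUnit) hsF hsurj hkn
      hea (hCn n (by omega))
    rw [abs_le]
    constructor <;> push_cast [mul_comm (C : ℤ)] at hlow hup ⊢ <;> omega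
  obtain ⟨B, hB⟩ := (Filter.isBoundedUnder_of_eventually_le
    ((Filter.eventually_atTop (α := ℕ)).2 ⟨k + 1, fun n hn => bound n hn⟩)).bddAbove_range
  exact ⟨B, fun n _ => hB ⟨n, rfl⟩⟩

/-- Let `O` be the ring of integers of a finite extension of `ℚ_p` (a complete DVR) with
uniformizer `π`, `Λ = O[[T]]`, and `P = (T - c)` a height-one prime of `Λ` generated by a
linear distinguished polynomial with `c ∈ πO`.  Let `Y` be a finitely generated torsion
`Λ`-module and `C ≥ 0` with `Fitt_{Λ_P, i}(Y_P) = P^C Λ_P`.  For each `n > 0` set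
`P_n = (T - c - π^n)`, let `ev n : Λ → O` be the specialization with kernel `P_n`
(so `Λ/P_n ≅ O`), and define `C(n)` by `Fitt_{O,i}(Y ⊗_Λ Λ/P_n) = π^{C(n)} O`.
Then `limsup_{n → ∞} |C(n) - C·n| < ∞`, i.e. `|C(n) - C·n|` is bounded. -/
theorem fitt_specialization_asymptotic
    {O : Type*} [CommRing O] [IsDomain O] [IsDiscreteValuationRing O]
    [IsAdicComplete (IsLocalRing.maximalIdeal O) O]
    (π : O) (hπ : Irreducible π) (c : O) (hc : c ∈ Ideal.span {π})
    (Y : Type*) [AddCommGroup Y] [Module (PowerSeries O) Y]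
    [Module.Finite (PowerSeries O) Y] (htor : Module.IsTorsion (PowerSeries O) Y)
    (i : ℕ)
    [hP : (Ideal.span {PowerSeries.X - PowerSeries.C c}).IsPrime]
    (C : ℕ)
    (hC : Ideal.map (algebraMap (PowerSeries O)
          (Localization.AtPrime (Ideal.span {PowerSeries.X - PowerSeries.C c})))
          (fittingIdeal (PowerSeries O) Y i)
        = (Ideal.map (algebraMap (PowerSeries O)
            (Localization.AtPrime (Ideal.span {PowerSeries.X - PowerSeries.C c})))
            (Ideal.span {PowerSeries.X - PowerSeries.C c})) ^ C)
    (ev : ℕ → PowerSeries O →+* O)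
    (hev : ∀ n : ℕ, 0 < n → Function.Surjective (ev n) ∧
      RingHom.ker (ev n) = Ideal.span {PowerSeries.X - PowerSeries.C (c + π ^ n)})
    (Cn : ℕ → ℕ)
    (hCn : ∀ n : ℕ, 0 < n →
      Ideal.map (ev n) (fittingIdeal (PowerSeries O) Y i) = Ideal.span {π ^ Cn n}) :
    ∃ B : ℤ, ∀ n : ℕ, 0 < n → |(Cn n : ℤ) - (C : ℤ) * n| ≤ B :=
  fitt_specialization_asymptotic_general π hπ c hc Y i (hP := hP) C hC ev hev Cn hCn
end

section
/- Let Γ ≅ Z_p^2 be topologically generated by γ_1, γ_2, let O be a complete DVR with uniformizer π and residue field k, and let Λ = O[[Γ]]. Let (a_1,a_2), (b_1,b_2) ∈ Z_p^2 with a_1Z_p + a_2Z_p = Z_p and b_1Z_p + b_2Z_p = Z_p. If the ideal (γ_1^{a_1}γ_2^{a_2} − 1, π) of Λ equals (γ_1^{b_1}γ_2^{b_2} − 1, π), then there exists e ∈ Z_p^× with (b_1, b_2) = (e·a_1, e·a_2). -/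
/-- `g` is the two-variable "gamma-power" function of the Iwasawa algebra
`Λ = O[[Γ]] ≅ O[[T₁,T₂]]` attached to `Γ ≅ ℤ_p²` with topological generators
`γ₁ = 1 + T₁` and `γ₂ = 1 + T₂`: namely `g a b = γ₁^a γ₂^b` for `a b : ℤ_p`.  The map
`(a,b) ↦ γ₁^a γ₂^b` is the unique multiplicative, continuous extension of
`(n₁,n₂) ↦ (1+T₁)^{n₁} (1+T₂)^{n₂}` from ℕ² to ℤ_p²; continuity is expressed through the
standard congruences modulo the ideals `((1+Tᵢ)^{p^m} - 1)`. -/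
def IsGammaPow (p : ℕ) [Fact p.Prime] {O : Type*} [CommRing O]
    (g : ℤ_[p] → ℤ_[p] → MvPowerSeries (Fin 2) O) : Prop :=
  g 0 0 = 1 ∧
  (∀ a b a' b' : ℤ_[p], g (a + a') (b + b') = g a b * g a' b') ∧
  g 1 0 = 1 + MvPowerSeries.X 0 ∧
  g 0 1 = 1 + MvPowerSeries.X 1 ∧
  ∀ (a b : ℤ_[p]) (m n₁ n₂ : ℕ),
    (n₁ : ℤ_[p]) - a ∈ Ideal.span {(p : ℤ_[p]) ^ m} →
    (n₂ : ℤ_[p]) - b ∈ Ideal.span {(p : ℤ_[p]) ^ m} →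
    g a b - (1 + MvPowerSeries.X 0) ^ n₁ * (1 + MvPowerSeries.X 1) ^ n₂ ∈
      Ideal.span {(1 + MvPowerSeries.X 0) ^ p ^ m - 1,
        (1 + MvPowerSeries.X 1) ^ p ^ m - 1}

/-!
For each `m`, the character `Γ → ℤ/p^m`, `(x, y) ↦ a₁ y - a₂ x`, kills `γ^a`, so the induced
specialization `Λ → k[ℤ/p^m]` (with `k = O/π`) kills the ideal `(γ^a - 1, π)`. Hence it kills
`γ^b - 1`, which says `a₁ b₂ ≡ a₂ b₁ mod p^m`. So `a₁ b₂ = a₂ b₁`, and two unimodular vectors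
satisfying this are proportional by a unit.
-/

open MvPowerSeries

namespace MvPowerSeries

variable {σ R S : Type*} [Finite σ] [CommRing R] [CommRing S]

noncomputable def evalNilpotent (φ : R →+* S) (w : σ → S) (hw : ∀ i, IsNilpotent (w i)) :
    MvPowerSeries σ R →+* S :=
  letI : UniformSpace R := ⊥
  letI : UniformSpace S := ⊥
  eval₂Hom (φ := φ) continuous_of_discreteTopology
    ⟨fun i => (hw i).isTopologicallyNilpotent, by simp⟩

variable (φ : R →+* S) {w : σ → S} (hw : ∀ i, IsNilpotent (w i))

@[simp]
theorem evalNilpotent_C (r : R) : evalNilpotent φ w hw (C r) = φ r :=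
  let _ : UniformSpace R := ⊥
  let _ : UniformSpace S := ⊥
  (congrFun (coe_eval₂Hom _ _) _).trans (eval₂_C _ _ r)

@[simp]
theorem evalNilpotent_X (i : σ) : evalNilpotent φ w hw (X i) = w i :=
  let _ : UniformSpace R := ⊥
  let _ : UniformSpace S := ⊥
  (congrFun (coe_eval₂Hom _ _) _).trans (eval₂_X _ _ i)

end MvPowerSeries

theorem isNilpotent_sub_one_of_pow_expChar_pow_eq_one {S : Type*} [CommRing S] {p : ℕ}
    [ExpChar S p] {u : S} {m : ℕ} (hu : u ^ p ^ m = 1) : IsNilpotent (u - 1) :=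
  ⟨p ^ m, by rw [sub_pow_expChar_pow, hu, one_pow, sub_self]⟩

instance AddMonoidAlgebra.charP {k G : Type*} [CommSemiring k] [AddMonoid G] (p : ℕ)
    [CharP k p] : CharP (AddMonoidAlgebra k G) p :=
  charP_of_injective_algebraMap AddMonoidAlgebra.single_right_injective p

section GammaPow

open AddMonoidAlgebra PadicInt

variable {p : ℕ} [Fact p.Prime] {O k : Type*} [CommRing O] [CommRing k]

theorem single_toZModPow_pow_eq_one (m : ℕ) (c : ℤ_[p]) :
    (single (toZModPow m c) 1 : AddMonoidAlgebra k (ZMod (p ^ m))) ^ p ^ m = 1 := by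
  rw [single_pow, one_pow, nsmul_eq_mul, ZMod.natCast_self, zero_mul, one_def]

variable [CharP k p]

/-- The specialization `Λ → k[ℤ/p^m]` along the character `(x, y) ↦ x c₀ + y c₁ mod p^m` of `Γ`. -/
noncomputable def evalAtCharacter (φ : O →+* k) (m : ℕ) (c : Fin 2 → ℤ_[p]) :
    MvPowerSeries (Fin 2) O →+* AddMonoidAlgebra k (ZMod (p ^ m)) :=
  evalNilpotent ((algebraMap k _).comp φ) (fun i => single (toZModPow m (c i)) 1 - 1)
    fun i => isNilpotent_sub_one_of_pow_expChar_pow_eq_one (single_toZModPow_pow_eq_one m (c i))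

variable {g : ℤ_[p] → ℤ_[p] → MvPowerSeries (Fin 2) O}

theorem IsGammaPow.evalAtCharacter_apply (hg : IsGammaPow p g) (φ : O →+* k) (m : ℕ)
    (c : Fin 2 → ℤ_[p]) (x y : ℤ_[p]) :
    evalAtCharacter φ m c (g x y) = single (toZModPow m (x * c 0 + y * c 1)) 1 := by
  set Φ := evalAtCharacter φ m c
  have hX : ∀ i, Φ (1 + X i) = single (toZModPow m (c i)) 1 := fun i => by
    simp [Φ, evalAtCharacter]
  have hker : Ideal.span {(1 + X 0) ^ p ^ m - 1, (1 + X 1) ^ p ^ m - 1} ≤ RingHom.ker Φ := by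
    rw [Ideal.span_le]
    rintro _ (rfl | rfl) <;>
      simp only [SetLike.mem_coe, RingHom.mem_ker, map_sub, map_pow, map_one, hX,
        single_toZModPow_pow_eq_one, sub_self]
  have happr : ∀ z : ℤ_[p], ((appr z m : ℕ) : ℤ_[p]) - z ∈ Ideal.span {(p : ℤ_[p]) ^ m} :=
    fun z => neg_sub z _ ▸ Submodule.neg_mem _ (appr_spec m z)
  have hcast : ∀ z : ℤ_[p], ((appr z m : ℕ) : ZMod (p ^ m)) = toZModPow m z := by
    intro z
    rw [← map_natCast (toZModPow m), ← sub_eq_zero, ← map_sub, ← RingHom.mem_ker, ker_toZModPow]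
    exact happr z
  have hg' := hker (hg.2.2.2.2 x y m _ _ (happr x) (happr y))
  rw [RingHom.mem_ker, map_sub, sub_eq_zero] at hg'
  rw [hg', map_mul, map_pow, map_pow, hX, hX, single_pow, single_pow, single_mul_single,
    nsmul_eq_mul, nsmul_eq_mul, hcast, hcast, one_pow, one_pow, one_mul, map_add, map_mul, map_mul]

theorem IsGammaPow.mul_eq_mul_of_mem_span (hg : IsGammaPow p g) {π : O} (hπ : ¬IsUnit π)
    (hp : (p : O) ∈ Ideal.span {π}) {a₁ a₂ b₁ b₂ : ℤ_[p]}
    (hmem : g b₁ b₂ - 1 ∈ Ideal.span {g a₁ a₂ - 1, C π}) : a₁ * b₂ = a₂ * b₁ := by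
  have : Nontrivial (O ⧸ Ideal.span {π}) :=
    Ideal.Quotient.nontrivial_iff.mpr (by rwa [Ne, Ideal.span_singleton_eq_top])
  have : CharP (O ⧸ Ideal.span {π}) p :=
    (CharP.charP_iff_prime_eq_zero Fact.out).mpr (Ideal.Quotient.eq_zero_iff_mem.mpr hp)
  rw [← sub_eq_zero, ← ext_of_toZModPow]
  intro m
  -- the character `(x, y) ↦ a₁ y - a₂ x` kills `γ^a`
  let Φ := evalAtCharacter (Ideal.Quotient.mk (Ideal.span {π})) m ![-a₂, a₁]
  have hker : Ideal.span {g a₁ a₂ - 1, C π} ≤ RingHom.ker Φ := by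
    rw [Ideal.span_le]
    rintro _ (rfl | rfl)
    · simp [Φ, hg.evalAtCharacter_apply, one_def, mul_comm]
    · simp [Φ, evalAtCharacter]
  have hb := hker hmem
  simp only [RingHom.mem_ker, map_sub, map_one, Φ, hg.evalAtCharacter_apply, one_def,
    sub_eq_zero] at hb
  rw [map_zero, show a₁ * b₂ - a₂ * b₁ = b₁ * -a₂ + b₂ * a₁ by ring]
  simpa using single_left_injective one_ne_zero hb
end GammaPow

theorem exists_unit_mul_eq_of_mul_eq_mul {R : Type*} [CommRing R] {a₁ a₂ b₁ b₂ : R}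
    (ha : IsCoprime a₁ a₂) (hb : IsCoprime b₁ b₂) (hab : a₁ * b₂ = a₂ * b₁) :
    ∃ e : Rˣ, b₁ = e * a₁ ∧ b₂ = e * a₂ := by
  obtain ⟨s, t, hst⟩ := ha
  obtain ⟨x, y, hxy⟩ := hb
  have he₁ : b₁ = (s * b₁ + t * b₂) * a₁ := by linear_combination (-b₁) * hst - t * hab
  have he₂ : b₂ = (s * b₁ + t * b₂) * a₂ := by linear_combination (-b₂) * hst + s * hab
  have hunit : (s * b₁ + t * b₂) * (x * a₁ + y * a₂) = 1 := by
    linear_combination hxy - x * he₁ - y * he₂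
  exact ⟨.mkOfMulEqOne _ _ hunit, he₁, he₂⟩

theorem exists_unit_of_ideal_eq_general
    (p : ℕ) [Fact p.Prime] {O : Type*} [CommRing O]
    (π : O) (hπ : Irreducible π) (hp : (p : O) ∈ Ideal.span {π})
    (g : ℤ_[p] → ℤ_[p] → MvPowerSeries (Fin 2) O) (hg : IsGammaPow p g)
    (a₁ a₂ b₁ b₂ : ℤ_[p])
    (ha : Ideal.span {a₁, a₂} = ⊤) (hb : Ideal.span {b₁, b₂} = ⊤)
    (h : Ideal.span {g a₁ a₂ - 1, MvPowerSeries.C (σ := Fin 2) (R := O) π}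
       = Ideal.span {g b₁ b₂ - 1, MvPowerSeries.C (σ := Fin 2) (R := O) π}) :
    ∃ e : ℤ_[p]ˣ, b₁ = (e : ℤ_[p]) * a₁ ∧ b₂ = (e : ℤ_[p]) * a₂ := by
  have hmem : g b₁ b₂ - 1 ∈ Ideal.span {g a₁ a₂ - 1, C π} :=
    h ▸ Ideal.subset_span (Set.mem_insert _ _)
  refine exists_unit_mul_eq_of_mul_eq_mul ?_ ?_ (hg.mul_eq_mul_of_mem_span hπ.not_isUnit hp hmem)
  · rwa [← Ideal.sup_eq_top_iff_isCoprime, ← Ideal.span_insert]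
  · rwa [← Ideal.sup_eq_top_iff_isCoprime, ← Ideal.span_insert]

/-- Let `Γ ≅ ℤ_p²` be topologically generated by `γ₁, γ₂`, let `O` be a complete DVR with
uniformizer `π` (and residue characteristic `p`), and let `Λ = O[[Γ]]`.  Let
`(a₁,a₂), (b₁,b₂) ∈ ℤ_p²` with `a₁ℤ_p + a₂ℤ_p = ℤ_p` and `b₁ℤ_p + b₂ℤ_p = ℤ_p`.
If the ideal `(γ₁^{a₁}γ₂^{a₂} - 1, π)` of `Λ` equals `(γ₁^{b₁}γ₂^{b₂} - 1, π)`, then there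
exists `e ∈ ℤ_p^×` with `(b₁, b₂) = (e·a₁, e·a₂)`. -/
theorem exists_unit_of_ideal_eq
    (p : ℕ) [Fact p.Prime] {O : Type*} [CommRing O] [IsDomain O]
    [IsDiscreteValuationRing O] [IsAdicComplete (IsLocalRing.maximalIdeal O) O]
    (π : O) (hπ : Irreducible π) (hp : (p : O) ∈ Ideal.span {π})
    (g : ℤ_[p] → ℤ_[p] → MvPowerSeries (Fin 2) O) (hg : IsGammaPow p g)
    (a₁ a₂ b₁ b₂ : ℤ_[p])
    (ha : Ideal.span {a₁, a₂} = ⊤) (hb : Ideal.span {b₁, b₂} = ⊤)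
    (h : Ideal.span {g a₁ a₂ - 1, MvPowerSeries.C (σ := Fin 2) (R := O) π}
       = Ideal.span {g b₁ b₂ - 1, MvPowerSeries.C (σ := Fin 2) (R := O) π}) :
    ∃ e : ℤ_[p]ˣ, b₁ = (e : ℤ_[p]) * a₁ ∧ b₂ = (e : ℤ_[p]) * a₂ :=
  exists_unit_of_ideal_eq_general p π hπ hp g hg a₁ a₂ b₁ b₂ ha hb h
end

section
/- Let G be a finite abelian group, p a prime, R = Z_p[G], and X a Z_p[G]-module that is torsion-free as a Z_p-module. For ν > 0 set X̄_ν = X ⊗_Z Z/p^ν Z and R_ν = R/p^ν R. Then the reduction map Hom_R(X, R) → Hom_{R_ν}(X̄_ν, R_ν) is surjective, and it induces an R_ν-isomorphism Hom_R(X, R) ⊗_Z Z/p^ν Z ≅ Hom_{R_ν}(X̄_ν, R_ν). -/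
/-!
Evaluating at the identity coefficient identifies `Hom_R(X, R)` with `Hom_{ℤ_p}(X, ℤ_p)`, and
likewise over `R_ν`, so surjectivity reduces to lifting an additive map `X → ℤ/p^ν` to `X → ℤ_p`.
Such a lift is built one level at a time. As `X` has no `p`-torsion, `p x ↦ f x` is a well-defined
map from `p X` to `ℤ/p^n = p^(-n) ℤ / ℤ ⊆ ℝ / ℤ`; it extends to `X` because `ℝ / ℤ` is divisible,
and the extension is killed by `p^(n+1)`, i.e. it is a map `X → ℤ/p^(n+1)` lifting `f`. The
compatible system of lifts has a limit in `ℤ_p`. The kernel of the reduction is `p^ν Hom_R(X, R)`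
because `p^ν` is a non-zero-divisor of `R`.
-/

open PadicInt MonoidAlgebra

namespace ZMod

variable {N : ℕ} [NeZero N]

theorem exists_toAddCircle_eq_of_nsmul_eq_zero {z : UnitAddCircle} (hz : N • z = 0) :
    ∃ a : ZMod N, toAddCircle a = z := by
  obtain ⟨r, rfl⟩ := QuotientAddGroup.mk_surjective z
  obtain ⟨j, hj⟩ := (AddCircle.coe_eq_zero_iff 1).mp ((AddCircle.coe_nsmul 1).trans hz)
  refine ⟨j, ?_⟩
  rw [toAddCircle_intCast]
  congr 1
  have : (N : ℝ) ≠ 0 := Nat.cast_ne_zero.mpr (NeZero.ne N)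
  rw [zsmul_eq_mul, mul_one, nsmul_eq_mul] at hj
  field_simp
  linarith

theorem toAddCircle_castHom {K : ℕ} [NeZero K] (h : N ∣ K) (a : ZMod K) :
    toAddCircle (castHom h (ZMod N) a) = (K / N) • toAddCircle a := by
  obtain ⟨j, rfl⟩ := intCast_surjective a
  rw [map_intCast, toAddCircle_intCast, toAddCircle_intCast, ← AddCircle.coe_nsmul, nsmul_eq_mul,
    Nat.cast_div h (Nat.cast_ne_zero.mpr (NeZero.ne N))]
  congr 1
  have : (K : ℝ) ≠ 0 := Nat.cast_ne_zero.mpr (NeZero.ne K)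
  field_simp

end ZMod

namespace PadicInt

variable {p : ℕ} [Fact p.Prime] {M : Type*} [AddCommGroup M]

theorem exists_addMonoidHom_lift (F : ∀ n, M →+ ZMod (p ^ n))
    (hF : ∀ n x, ZMod.castHom (pow_dvd_pow p n.le_succ) _ (F (n + 1) x) = F n x) :
    ∃ μ : M →+ ℤ_[p], ∀ n x, toZModPow n (μ x) = F n x := by
  have hlim : ∀ x, ∃ z : ℤ_[p], ∀ n, toZModPow n z = F n x := fun x => by
    have hs : ∀ n, (p : ℤ) ^ n ∣ ((F (n + 1) x).val : ℤ) - (F n x).val := fun n => by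
      rw [← Nat.cast_pow, ← ZMod.intCast_eq_intCast_iff_dvd_sub, Int.cast_natCast,
        Int.cast_natCast, ZMod.natCast_zmod_val, ← ZMod.cast_eq_val, ← hF n x, ZMod.castHom_apply]
    exact ⟨_, fun n => (toZModPow_ofIntSeq_of_pow_dvd_sub (fun n => ((F n x).val : ℤ)) p hs n).trans
      (by rw [Int.cast_natCast, ZMod.natCast_zmod_val])⟩
  choose μ hμ using hlim
  exact ⟨AddMonoidHom.mk' μ fun x y => ext_of_toZModPow.mp fun n => by simp [hμ],
    fun n x => hμ x n⟩

theorem _root_.AddMonoidHom.map_padicInt_smul [Module ℤ_[p] M] (f : M →+ ℤ_[p]) (c : ℤ_[p])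
    (x : M) : f (c • x) = c * f x := by
  refine ext_of_toZModPow.mp fun n => ?_
  obtain ⟨d, hd⟩ := Ideal.mem_span_singleton'.mp (appr_spec n c)
  have hc : c = c.appr n + p ^ n * d := by linear_combination -hd
  have hnat : ∀ (m : ℕ) (y : M), f ((m : ℤ_[p]) • y) = m * f y := fun m y => by
    rw [Nat.cast_smul_eq_nsmul, map_nsmul, nsmul_eq_mul]
  have hvanish : ∀ y : ℤ_[p], toZModPow n ((p : ℤ_[p]) ^ n * y) = 0 := fun y => by
    rw [map_mul, map_pow, map_natCast, ← Nat.cast_pow, ZMod.natCast_self, zero_mul]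
  rw [hc, add_smul, map_add, mul_smul, ← Nat.cast_pow, hnat, hnat, Nat.cast_pow, add_mul, mul_assoc,
    map_add, map_add, hvanish, hvanish]

end PadicInt

namespace AddMonoidHom

variable {p : ℕ} {M : Type*} [AddCommGroup M]

theorem exists_zmod_pow_succ_lift [NeZero p] (hM : ∀ x : M, p • x = 0 → x = 0) {n : ℕ}
    (f : M →+ ZMod (p ^ n)) :
    ∃ g : M →+ ZMod (p ^ (n + 1)),
      ∀ x, ZMod.castHom (pow_dvd_pow p n.le_succ) (ZMod (p ^ n)) (g x) = f x := by
  obtain ⟨ψ, hψ⟩ := (Module.Baer.of_divisible UnitAddCircle).extension_property_addMonoidHom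
    (nsmulAddMonoidHom p) ((injective_iff_map_eq_zero _).mpr hM) (ZMod.toAddCircle.comp f)
  have hdiv : ∀ x, p • ψ x = ZMod.toAddCircle (f x) := fun x => by
    simpa using DFunLike.congr_fun hψ x
  have htors : ∀ x, p ^ (n + 1) • ψ x = 0 := fun x => by
    rw [pow_succ', mul_nsmul', ← map_nsmul, hdiv, map_nsmul, nsmul_eq_mul, ZMod.natCast_self,
      zero_mul, map_zero]
  choose g hg using fun x => ZMod.exists_toAddCircle_eq_of_nsmul_eq_zero (htors x)
  refine ⟨AddMonoidHom.mk' g fun x y => ZMod.toAddCircle_injective _ (by simp [hg]), fun x => ?_⟩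
  apply ZMod.toAddCircle_injective
  rw [ZMod.toAddCircle_castHom, AddMonoidHom.mk'_apply, hg, pow_succ,
    Nat.mul_div_cancel_left _ (Nat.pos_of_neZero _), hdiv]

theorem exists_padicInt_lift [Fact p.Prime] (hM : ∀ x : M, p • x = 0 → x = 0) {ν : ℕ}
    (f : M →+ ZMod (p ^ ν)) :
    ∃ μ : M →+ ℤ_[p], ∀ x, toZModPow ν (μ x) = f x := by
  choose L hL using fun n (g : M →+ ZMod (p ^ n)) => exists_zmod_pow_succ_lift hM g
  let below (n : ℕ) (h : n ≤ ν) : M →+ ZMod (p ^ n) :=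
    (ZMod.castHom (pow_dvd_pow p h) (ZMod (p ^ n))).toAddMonoidHom.comp f
  -- Up to level `ν` reduce `f`; above it, lift one level at a time.
  let F (n : ℕ) : M →+ ZMod (p ^ n) :=
    Nat.rec (below 0 ν.zero_le) (fun k Fk => if h : k + 1 ≤ ν then below (k + 1) h else L k Fk) n
  have hF_le : ∀ n (h : n ≤ ν), F n = below n h := by
    rintro (_ | n) h
    · rfl
    · exact dif_pos h
  have hF : ∀ n x, ZMod.castHom (pow_dvd_pow p n.le_succ) _ (F (n + 1) x) = F n x := by
    intro n x
    by_cases h : n + 1 ≤ ν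
    · rw [hF_le _ h, hF_le _ (by omega)]
      exact RingHom.congr_fun (ZMod.castHom_comp (pow_dvd_pow p n.le_succ) (pow_dvd_pow p h)) (f x)
    · rw [show F (n + 1) = L n (F n) from dif_neg h]
      exact hL n (F n) x
  obtain ⟨μ, hμ⟩ := PadicInt.exists_addMonoidHom_lift F hF
  refine ⟨μ, fun x => (hμ ν x).trans ?_⟩
  rw [hF_le ν le_rfl]
  exact RingHom.congr_fun ZMod.castHom_self (f x)

end AddMonoidHom

theorem LinearMap.exists_eq_smul_of_forall_eq_smul {R M N : Type*} [CommSemiring R]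
    [AddCommMonoid M] [AddCommMonoid N] [Module R M] [Module R N] {a : R} (ha : IsSMulRegular N a)
    (f : M →ₗ[R] N) (hf : ∀ x, ∃ y, f x = a • y) : ∃ f' : M →ₗ[R] N, f = a • f' := by
  choose g hg using hf
  refine ⟨{ toFun := g, map_add' := fun x y => ha ?_, map_smul' := fun c x => ha ?_ },
    LinearMap.ext hg⟩
  · change a • g (x + y) = a • (g x + g y)
    rw [smul_add, ← hg, ← hg, ← hg, map_add]
  · change a • g (c • x) = a • (c • g x)
    rw [smul_comm, ← hg, ← hg, map_smul]

namespace MonoidAlgebra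

theorem exists_eq_smul_of_dvd_coeff {k M : Type*} [Semiring k] (c : k) (r : k[M])
    (h : ∀ m, c ∣ r.coeff m) : ∃ r' : k[M], r = c • r' := by
  choose d hd using h
  refine ⟨∑ m ∈ r.coeff.support, single m (d m), ?_⟩
  conv_lhs => rw [← sum_coeff_single r]
  simp only [Finsupp.sum, Finset.smul_sum, smul_single', hd]

section CoeffOne

variable {k G X : Type*} [CommSemiring k] [Group G] [Fintype G] [AddCommMonoid X] [Module k X]
  [Module k[G] X] [IsScalarTower k k[G] X]

noncomputable def linearMapOfCoeffOne (μ : X →ₗ[k] k) : X →ₗ[k[G]] k[G] where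
  toFun x := ofCoeff (Finsupp.equivFunOnFinite.symm fun g ↦ μ (single g⁻¹ (1 : k) • x))
  map_add' x y := by ext; simp [smul_add]
  map_smul' r x := by
    rw [RingHom.id_apply]
    induction r using induction_linear with
    | zero => ext; simp
    | add r s hr hs =>
      rw [add_smul, add_smul, ← hr, ← hs]
      ext
      simp [smul_add]
    | single s a =>
      ext h
      have hsingle : single (h⁻¹ * s) a = a • single (h⁻¹ * s) (1 : k) := by
        rw [smul_single', mul_one]
      simp only [Finsupp.equivFunOnFinite_symm_apply_apply, smul_eq_mul, coeff_single_mul_apply,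
        smul_smul, single_mul_single, mul_inv_rev, inv_inv, one_mul]
      rw [hsingle, smul_assoc, map_smul, smul_eq_mul]

theorem coeff_linearMapOfCoeffOne (μ : X →ₗ[k] k) (x : X) (g : G) :
    (linearMapOfCoeffOne μ x).coeff g = μ (single g⁻¹ (1 : k) • x) := by
  simp [linearMapOfCoeffOne]

end CoeffOne

variable {p : ℕ} [Fact p.Prime] {ν : ℕ}

theorem exists_linearMap_lift_toZModPow {G X : Type*} [Group G] [Fintype G] [AddCommGroup X]
    [Module ℤ_[p] X] [Module ℤ_[p][G] X] [IsScalarTower ℤ_[p] ℤ_[p][G] X]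
    (hX : ∀ x : X, p • x = 0 → x = 0)
    (h : X →ₛₗ[mapRingHom G (toZModPow (p := p) ν)] (ZMod (p ^ ν))[G]) :
    ∃ f : X →ₗ[ℤ_[p][G]] ℤ_[p][G], ∀ x, mapRingHom G (toZModPow ν) (f x) = h x := by
  obtain ⟨μ, hμ⟩ := AddMonoidHom.exists_padicInt_lift hX
    (AddMonoidHom.mk' (fun x => (h x).coeff 1) fun x y => by simp)
  refine ⟨linearMapOfCoeffOne { μ with map_smul' := μ.map_padicInt_smul }, fun x => ?_⟩
  ext g
  rw [coeff_mapRingHom, coeff_linearMapOfCoeffOne]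
  refine (hμ _).trans ?_
  rw [AddMonoidHom.mk'_apply, map_smulₛₗ, mapRingHom_single, map_one (toZModPow ν), smul_eq_mul,
    coeff_single_mul_apply, inv_inv, mul_one, one_mul]

theorem mapRingHom_toZModPow_eq_zero_iff {G : Type*} [Monoid G] (r : ℤ_[p][G]) :
    mapRingHom G (toZModPow ν) r = 0 ↔ ∃ r', r = (p : ℤ_[p][G]) ^ ν * r' := by
  have hpν : (p : ℤ_[p][G]) ^ ν = algebraMap ℤ_[p] _ ((p : ℤ_[p]) ^ ν) := by
    rw [map_pow, map_natCast]
  simp_rw [hpν, ← Algebra.smul_def]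
  constructor
  · intro hr
    refine exists_eq_smul_of_dvd_coeff _ r fun g => ?_
    rw [← Ideal.mem_span_singleton, ← ker_toZModPow, RingHom.mem_ker, ← coeff_mapRingHom, hr,
      coeff_zero, Finsupp.coe_zero, Pi.zero_apply]
  · rintro ⟨r', rfl⟩
    ext g
    rw [coeff_mapRingHom, coeff_smul_apply, smul_eq_mul, map_mul, map_pow, map_natCast,
      ← Nat.cast_pow, ZMod.natCast_self, zero_mul, coeff_zero, Finsupp.coe_zero, Pi.zero_apply]

theorem forall_mapRingHom_toZModPow_eq_zero_iff {G X : Type*} [CommGroup G] [AddCommMonoid X]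
    [Module ℤ_[p][G] X] (f : X →ₗ[ℤ_[p][G]] ℤ_[p][G]) :
    (∀ x, mapRingHom G (toZModPow ν) (f x) = 0) ↔
      ∃ f' : X →ₗ[ℤ_[p][G]] ℤ_[p][G], f = (p : ℤ_[p][G]) ^ ν • f' := by
  simp_rw [mapRingHom_toZModPow_eq_zero_iff]
  refine ⟨fun hf => LinearMap.exists_eq_smul_of_forall_eq_smul ?_ f hf, ?_⟩
  · intro y z hyz
    have hreg : IsSMulRegular ℤ_[p][G] ((p ^ ν : ℕ) : ℤ_[p]) :=
      Module.IsTorsionFree.isSMulRegular <| IsRegular.of_ne_zero <|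
        Nat.cast_ne_zero.mpr (pow_ne_zero _ (Fact.out : p.Prime).ne_zero)
    simp only [← Nat.cast_pow, Nat.cast_smul_eq_nsmul] at hyz
    exact hreg (by simpa only [Nat.cast_smul_eq_nsmul] using hyz)
  · rintro ⟨f', rfl⟩ x
    exact ⟨f' x, rfl⟩

end MonoidAlgebra

theorem hom_reduction_surjective_general
    (p : ℕ) [Fact p.Prime] (ν : ℕ)
    {G : Type*} [CommGroup G] [Fintype G]
    {X : Type*} [AddCommGroup X] [Module (MonoidAlgebra ℤ_[p] G) X]
    (hXtf : ∀ (c : ℤ_[p]) (x : X),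
      (algebraMap ℤ_[p] (MonoidAlgebra ℤ_[p] G) c) • x = 0 → c = 0 ∨ x = 0)
    {Y : Type*} [AddCommGroup Y] [Module (MonoidAlgebra (ZMod (p ^ ν)) G) Y]
    (φ : MonoidAlgebra ℤ_[p] G →+* MonoidAlgebra (ZMod (p ^ ν)) G)
    (hφ : ∀ (a : ℤ_[p]) (g : G),
      φ (MonoidAlgebra.single g a) = MonoidAlgebra.single g (PadicInt.toZModPow ν a))
    (q : X →ₛₗ[φ] Y) :
    (∀ h : Y →ₗ[MonoidAlgebra (ZMod (p ^ ν)) G] MonoidAlgebra (ZMod (p ^ ν)) G,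
      ∃ f : X →ₗ[MonoidAlgebra ℤ_[p] G] MonoidAlgebra ℤ_[p] G, ∀ x, φ (f x) = h (q x)) ∧
    (∀ f : X →ₗ[MonoidAlgebra ℤ_[p] G] MonoidAlgebra ℤ_[p] G,
      (∀ x, φ (f x) = 0) ↔
        ∃ f' : X →ₗ[MonoidAlgebra ℤ_[p] G] MonoidAlgebra ℤ_[p] G,
          f = ((p : MonoidAlgebra ℤ_[p] G) ^ ν) • f') := by
  obtain rfl : φ = mapRingHom G (toZModPow ν) :=
    ringHom_ext (fun a => by rw [hφ, mapRingHom_single]) (fun g => by rw [hφ, mapRingHom_single])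
  let _ : Module ℤ_[p] X := Module.compHom X (algebraMap ℤ_[p] ℤ_[p][G])
  have : IsScalarTower ℤ_[p] ℤ_[p][G] X := IsScalarTower.of_algebraMap_smul fun _ _ => rfl
  have hX : ∀ x : X, p • x = 0 → x = 0 := fun x hx =>
    (hXtf p x ((Nat.cast_smul_eq_nsmul ℤ_[p] p x).trans hx)).resolve_left
      (Nat.cast_ne_zero.mpr (Fact.out : p.Prime).ne_zero)
  exact ⟨fun h => MonoidAlgebra.exists_linearMap_lift_toZModPow hX (h.comp q),
    MonoidAlgebra.forall_mapRingHom_toZModPow_eq_zero_iff⟩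

/-- Let `G` be a finite abelian group, `p` a prime, `R = ℤ_p[G]`, and `X` a `ℤ_p[G]`-module
that is torsion-free over `ℤ_p`.  For `ν > 0`, let `X̄ν = X ⊗ ℤ/p^ν ℤ` (realized as any
`R_ν = R/p^ν R`-module `Y` with a surjective semilinear map `q : X → Y` whose kernel is
`p^ν X`, along the reduction map `φ : ℤ_p[G] → (ℤ/p^ν ℤ)[G]`).  Then the reduction map
`Hom_R(X, R) → Hom_{R_ν}(X̄ν, R_ν)`, `f ↦ (q x ↦ φ (f x))`, is surjective, and its kernel
is `p^ν · Hom_R(X,R)`, so it induces an `R_ν`-isomorphism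
`Hom_R(X, R) ⊗ ℤ/p^ν ℤ ≅ Hom_{R_ν}(X̄ν, R_ν)`. -/
theorem hom_reduction_surjective
    (p : ℕ) [Fact p.Prime] (ν : ℕ) (hν : 0 < ν)
    {G : Type*} [CommGroup G] [Fintype G]
    {X : Type*} [AddCommGroup X] [Module (MonoidAlgebra ℤ_[p] G) X]
    (hXtf : ∀ (c : ℤ_[p]) (x : X),
      (algebraMap ℤ_[p] (MonoidAlgebra ℤ_[p] G) c) • x = 0 → c = 0 ∨ x = 0)
    {Y : Type*} [AddCommGroup Y] [Module (MonoidAlgebra (ZMod (p ^ ν)) G) Y]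
    (φ : MonoidAlgebra ℤ_[p] G →+* MonoidAlgebra (ZMod (p ^ ν)) G)
    (hφ : ∀ (a : ℤ_[p]) (g : G),
      φ (MonoidAlgebra.single g a) = MonoidAlgebra.single g (PadicInt.toZModPow ν a))
    (q : X →ₛₗ[φ] Y) (hqsurj : Function.Surjective q)
    (hker : ∀ x : X, q x = 0 ↔ ∃ y : X, x = ((p : MonoidAlgebra ℤ_[p] G) ^ ν) • y) :
    (∀ h : Y →ₗ[MonoidAlgebra (ZMod (p ^ ν)) G] MonoidAlgebra (ZMod (p ^ ν)) G,
      ∃ f : X →ₗ[MonoidAlgebra ℤ_[p] G] MonoidAlgebra ℤ_[p] G, ∀ x, φ (f x) = h (q x)) ∧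
    (∀ f : X →ₗ[MonoidAlgebra ℤ_[p] G] MonoidAlgebra ℤ_[p] G,
      (∀ x, φ (f x) = 0) ↔
        ∃ f' : X →ₗ[MonoidAlgebra ℤ_[p] G] MonoidAlgebra ℤ_[p] G,
          f = ((p : MonoidAlgebra ℤ_[p] G) ^ ν) • f') :=
  hom_reduction_surjective_general p ν hXtf φ hφ q
end

section
/- Let H = H_1 × ⋯ × H_i be a finite abelian p-group written as a product of cyclic groups H_j of order p^{n_j} with fixed generators σ_j, let R = Z_p[H], let I_H be the augmentation ideal of R, and let J° = (∏_{j=1}^i I(H_j))·R, where I(H_j) is the augmentation ideal of Z_p[H_j]. Let X be an R-module and let D = ∏_{j=1}^i D_j with D_j = Σ_{m=1}^{|H_j|−1} m σ_j^m the Kolyvagin operator. Define s : R/I_H J° → R/I_H J° by s = Σ_{d ⊆ {1,…,i}} (−1)^{i−|d|} π_d, where π_d is induced by the projection H → ∏_{j∈d} H_j ⊆ H. Then for any x ∈ X, the map id_X ⊗ s on X ⊗_{Z_p} (R/I_H J°) sends Σ_{σ ∈ H} σx ⊗ σ^{-1} to (−1)^i · Dx ⊗ ∏_{j=1}^i (σ_j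 − 1). -/
instance primePowNeZero (p k : ℕ) [hp : Fact p.Prime] : NeZero (p ^ k) :=
  ⟨pow_ne_zero _ hp.out.ne_zero⟩

/-- `H = H₁ × ⋯ × H_i`, a product of cyclic groups `H_j` of order `p^{n_j}`. -/
abbrev Hgrp (p : ℕ) (i : ℕ) (n : Fin i → ℕ) : Type :=
  (j : Fin i) → Multiplicative (ZMod (p ^ n j))

/-- The fixed generator `σ_j` of the `j`-th factor `H_j`, viewed inside `H`. -/
def sigmaGen (p : ℕ) {i : ℕ} {n : Fin i → ℕ} (j : Fin i) : Hgrp p i n :=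
  Pi.mulSingle j (Multiplicative.ofAdd (1 : ZMod (p ^ n j)))

/-- The projection `π_d : H → ∏_{j ∈ d} H_j ⊆ H`. -/
def projD (p : ℕ) {i : ℕ} {n : Fin i → ℕ} (d : Finset (Fin i)) :
    Hgrp p i n →* Hgrp p i n where
  toFun h := fun j => if j ∈ d then h j else 1
  map_one' := by funext j; simp
  map_mul' a b := by funext j; by_cases hj : j ∈ d <;> simp [hj]

/-- The Kolyvagin operator `D = ∏_j D_j`, `D_j = Σ_{m=1}^{|H_j|-1} m σ_j^m`. -/
noncomputable def Dop (p : ℕ) [Fact p.Prime] (i : ℕ) (n : Fin i → ℕ) :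
    MonoidAlgebra ℤ_[p] (Hgrp p i n) :=
  ∏ j : Fin i, ∑ m ∈ Finset.range (p ^ n j),
    (m : ℤ_[p]) • MonoidAlgebra.of ℤ_[p] (Hgrp p i n) ((sigmaGen p j) ^ m)

/-- The augmentation ideal `I_H` of `R = ℤ_p[H]`. -/
noncomputable def augIdeal (p : ℕ) [Fact p.Prime] (i : ℕ) (n : Fin i → ℕ) :
    Ideal (MonoidAlgebra ℤ_[p] (Hgrp p i n)) :=
  RingHom.ker ((MonoidAlgebra.lift ℤ_[p] ℤ_[p] (Hgrp p i n))
    (1 : Hgrp p i n →* ℤ_[p])).toRingHom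

/-- The ideal `J° = (∏_j I(H_j))·R`, where `I(H_j)` is the augmentation ideal of
`ℤ_p[H_j]`. -/
noncomputable def Jcirc (p : ℕ) [Fact p.Prime] (i : ℕ) (n : Fin i → ℕ) :
    Ideal (MonoidAlgebra ℤ_[p] (Hgrp p i n)) :=
  ∏ j : Fin i, Ideal.span (Set.range fun t : Multiplicative (ZMod (p ^ n j)) =>
    MonoidAlgebra.of ℤ_[p] (Hgrp p i n) (Pi.mulSingle j t) - 1)

/-- The operator `s = Σ_{d ⊆ {1,…,i}} (−1)^{i−|d|} π_d` on `R` (it descends to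
`R/I_H J°`). -/
noncomputable def sTilde (p : ℕ) [Fact p.Prime] (i : ℕ) (n : Fin i → ℕ)
    (r : MonoidAlgebra ℤ_[p] (Hgrp p i n)) : MonoidAlgebra ℤ_[p] (Hgrp p i n) :=
  ∑ d : Finset (Fin i), ((-1 : ℤ_[p]) ^ (i - d.card)) •
    MonoidAlgebra.mapDomainRingHom ℤ_[p] (projD p d) r

/-!
For `τ ∈ H`, `π_d [τ] = ∏_{j ∈ d} [τ_j]`, so by inclusion–exclusion `s [τ] = ∏_j ([τ_j] - 1)`.
Write the `j`-th component of `σ` as `σ_j^{k_j}` with `0 ≤ k_j < |H_j|`. Since `(a - 1)²`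
divides `a^k - 1 - k (a - 1)`, we get `[σ_j^{-k_j}] - 1 ≡ -k_j ([σ_j] - 1)` modulo
`I_H · I(H_j)`, and multiplying these congruences over `j` gives
`s [σ⁻¹] ≡ (-1)^i (∏_j k_j) ∏_j ([σ_j] - 1)` modulo `I_H J°`. Summing `σx ⊗ s [σ⁻¹]` over `σ`
thus yields `(-1)^i (∑_σ (∏_j k_j) σ) x ⊗ ∏_j (σ_j - 1)`, and `∑_σ (∏_j k_j) σ` is the
expansion of `D = ∏_j ∑_m m σ_j^m`.
-/

section CommRing

variable {S : Type*} [CommRing S]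

theorem sq_sub_one_dvd_pow_sub_one_sub_mul (a : S) (k : ℕ) :
    (a - 1) ^ 2 ∣ a ^ k - 1 - k * (a - 1) := by
  induction k with
  | zero => simp
  | succ k ih =>
    have hsplit : a ^ (k + 1) - 1 - ↑(k + 1) * (a - 1)
        = (a ^ k - 1 - k * (a - 1)) + (a - 1) * (a ^ k - 1) := by push_cast; ring
    rw [hsplit]
    exact dvd_add ih (by rw [sq]; exact mul_dvd_mul_left _ (sub_one_dvd_pow_sub_one a k))

theorem sq_sub_one_dvd_pow_sub_one_add_mul {a b : S} (hab : a * b = 1) (k : ℕ) :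
    (a - 1) ^ 2 ∣ b ^ k - 1 + k * (a - 1) := by
  -- `b - 1 = -b (a - 1)` and `(a - 1) + (b - 1) = b (a - 1) ^ 2` when `a b = 1`
  obtain ⟨c, hc⟩ := sq_sub_one_dvd_pow_sub_one_sub_mul b k
  exact ⟨c * b ^ 2 + k * b,
    by linear_combination hc + (k * (2 - a) - c * (a * b - 2 * b + 1)) * hab⟩

theorem Fintype.prod_sub_one {ι : Type*} [Fintype ι] [DecidableEq ι] (f : ι → S) :
    ∏ j, (f j - 1) = ∑ d : Finset ι, (-1) ^ (Fintype.card ι - d.card) * ∏ j ∈ d, f j := by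
  simp_rw [sub_eq_add_neg, Finset.prod_add, ← Finset.powerset_univ, Finset.prod_const,
    Finset.card_univ_sdiff, mul_comm]

theorem Ideal.prod_sub_prod_mem_mul_prod {ι : Type*} (I : Ideal S) (A : ι → Ideal S)
    (s : Finset ι) {r t : ι → S} (hr : ∀ j ∈ s, r j ∈ A j) (ht : ∀ j ∈ s, t j ∈ A j)
    (hrt : ∀ j ∈ s, r j - t j ∈ I * A j) :
    ∏ j ∈ s, r j - ∏ j ∈ s, t j ∈ I * ∏ j ∈ s, A j := by
  induction s using Finset.cons_induction with
  | empty => simp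
  | cons a s ha ih =>
    simp only [Finset.mem_cons, forall_eq_or_imp] at hr ht hrt
    rw [Finset.prod_cons, Finset.prod_cons, Finset.prod_cons]
    have hsplit : r a * ∏ j ∈ s, r j - t a * ∏ j ∈ s, t j
        = (r a - t a) * ∏ j ∈ s, r j + t a * (∏ j ∈ s, r j - ∏ j ∈ s, t j) := by ring
    rw [hsplit]
    refine add_mem ?_ ?_
    · rw [← mul_assoc]
      exact Ideal.mul_mem_mul hrt.1 (Ideal.prod_mem_prod hr.2)
    · rw [mul_left_comm]
      exact Ideal.mul_mem_mul ht.1 (ih hr.2 ht.2 hrt.2)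

end CommRing

theorem MonoidAlgebra.of_sub_one_mem_ker_lift_one {k G : Type*} [CommRing k] [Monoid G] (g : G) :
    of k G g - 1 ∈ RingHom.ker (lift k k G 1).toRingHom := by
  simp [RingHom.mem_ker]

theorem ZMod.sum_val_eq_sum_range {M : Type*} [AddCommMonoid M] (N : ℕ) [NeZero N]
    (f : ℕ → M) : ∑ t : ZMod N, f t.val = ∑ m ∈ Finset.range N, f m := by
  obtain ⟨N, rfl⟩ := Nat.exists_eq_succ_of_ne_zero (NeZero.ne N)
  exact Fin.sum_univ_eq_sum_range f _

section Kolyvagin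

variable (p : ℕ) [Fact p.Prime] (i : ℕ) (n : Fin i → ℕ)

local notation "R" => MonoidAlgebra ℤ_[p] (Hgrp p i n)

local notation "of" => MonoidAlgebra.of ℤ_[p] (Hgrp p i n)

/-- The augmentation ideal `I(H_j)` of `ℤ_p[H_j]`, extended to `R`. -/
noncomputable def augIdealFactor (j : Fin i) : Ideal R :=
  Ideal.span (Set.range fun t : Multiplicative (ZMod (p ^ n j)) => of (Pi.mulSingle j t) - 1)

theorem Jcirc_eq_prod_augIdealFactor : Jcirc p i n = ∏ j, augIdealFactor p i n j := rfl

theorem of_mulSingle_sub_one_mem_augIdealFactor (j : Fin i)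
    (t : Multiplicative (ZMod (p ^ n j))) :
    of (Pi.mulSingle j t) - 1 ∈ augIdealFactor p i n j :=
  Ideal.subset_span ⟨t, rfl⟩

theorem augIdealFactor_le_augIdeal (j : Fin i) : augIdealFactor p i n j ≤ augIdeal p i n := by
  rw [augIdealFactor, Ideal.span_le]
  rintro _ ⟨t, rfl⟩
  exact MonoidAlgebra.of_sub_one_mem_ker_lift_one _

theorem mulSingle_eq_sigmaGen_pow (j : Fin i) (t : Multiplicative (ZMod (p ^ n j))) :
    (Pi.mulSingle j t : Hgrp p i n) = sigmaGen p j ^ (Multiplicative.toAdd t).val := by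
  rw [sigmaGen, ← Pi.mulSingle_pow, ← ofAdd_nsmul, nsmul_one, ZMod.natCast_zmod_val, ofAdd_toAdd]

theorem of_mulSingle_inv_sub_one_sub_smul_mem (j : Fin i) (t : Multiplicative (ZMod (p ^ n j))) :
    of (Pi.mulSingle j t⁻¹) - 1
        - (-((Multiplicative.toAdd t).val : ℤ_[p])) • (of (sigmaGen p j) - 1)
      ∈ augIdeal p i n * augIdealFactor p i n j := by
  have hinv : of (sigmaGen p j) * of (sigmaGen p j)⁻¹ = 1 := by
    rw [← map_mul, mul_inv_cancel, map_one]
  have hsq : (of (sigmaGen p j) - 1) ^ 2 ∈ augIdeal p i n * augIdealFactor p i n j := by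
    have hmem := of_mulSingle_sub_one_mem_augIdealFactor p i n j (Multiplicative.ofAdd 1)
    rw [sq]
    exact Ideal.mul_mem_mul (augIdealFactor_le_augIdeal p i n j hmem) hmem
  rw [Pi.mulSingle_inv, mulSingle_eq_sigmaGen_pow, ← inv_pow, map_pow, neg_smul, sub_neg_eq_add,
    Nat.cast_smul_eq_nsmul, nsmul_eq_mul]
  exact Ideal.mem_of_dvd _ (sq_sub_one_dvd_pow_sub_one_add_mul hinv _) hsq

theorem mapDomainRingHom_projD_of (d : Finset (Fin i)) (τ : Hgrp p i n) :
    MonoidAlgebra.mapDomainRingHom ℤ_[p] (projD p d) (of τ)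
      = ∏ j ∈ d, of (Pi.mulSingle j (τ j)) := by
  have hproj : projD p d τ = ∏ j ∈ d, Pi.mulSingle j (τ j) := by
    funext k
    simp [projD, Finset.prod_apply]
  rw [← map_prod, ← hproj]
  exact MonoidAlgebra.mapDomain_single

theorem sTilde_of (τ : Hgrp p i n) :
    sTilde p i n (of τ) = ∏ j, (of (Pi.mulSingle j (τ j)) - 1) := by
  classical
  rw [Fintype.prod_sub_one, Fintype.card_fin, sTilde]
  refine Finset.sum_congr rfl fun d _ => ?_
  rw [mapDomainRingHom_projD_of, Algebra.smul_def, map_pow, map_neg, map_one]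

theorem Dop_eq_sum :
    Dop p i n = ∑ σ : Hgrp p i n,
      (∏ j, ((Multiplicative.toAdd (σ j)).val : ℤ_[p])) • of σ := by
  classical
  have hfactor (j : Fin i) :
      ∑ m ∈ Finset.range (p ^ n j), (m : ℤ_[p]) • of (sigmaGen p j ^ m)
        = ∑ t : Multiplicative (ZMod (p ^ n j)),
            ((Multiplicative.toAdd t).val : ℤ_[p]) • of (Pi.mulSingle j t) := by
    simp_rw [mulSingle_eq_sigmaGen_pow]
    exact (ZMod.sum_val_eq_sum_range (p ^ n j) _).symm.trans
      (Fintype.sum_equiv Multiplicative.ofAdd _ _ fun _ => rfl)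
  rw [Dop, Finset.prod_congr rfl fun j _ => hfactor j, Finset.prod_univ_sum,
    Fintype.piFinset_univ]
  refine Finset.sum_congr rfl fun σ _ => ?_
  rw [Finset.prod_smul, ← map_prod, Finset.univ_prod_mulSingle]

theorem sTilde_of_inv_sub_smul_mem (σ : Hgrp p i n) :
    sTilde p i n (of σ⁻¹)
        - (∏ j, -((Multiplicative.toAdd (σ j)).val : ℤ_[p])) • ∏ j, (of (sigmaGen p j) - 1)
      ∈ augIdeal p i n * Jcirc p i n := by
  rw [sTilde_of, ← Finset.prod_smul, Jcirc_eq_prod_augIdealFactor]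
  refine Ideal.prod_sub_prod_mem_mul_prod _ _ _ (fun j _ => ?_) (fun j _ => ?_)
    (fun j _ => of_mulSingle_inv_sub_one_sub_smul_mem p i n j (σ j))
  · exact of_mulSingle_sub_one_mem_augIdealFactor p i n j _
  · exact Submodule.smul_of_tower_mem _ _
      (of_mulSingle_sub_one_mem_augIdealFactor p i n j (Multiplicative.ofAdd 1))

end Kolyvagin

/-- For any `R = ℤ_p[H]`-module `X` and `x ∈ X`, the map `id_X ⊗ s` on
`X ⊗_{ℤ_p} (R/I_H J°)` sends `Σ_{σ ∈ H} σx ⊗ σ⁻¹` to `(−1)^i · Dx ⊗ ∏_{j=1}^i (σ_j − 1)`;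
equivalently, their difference (computed in `X ⊗_{ℤ_p} R`) lies in `X ⊗ I_H J°`. -/
theorem kolyvagin_operator_identity
    (p : ℕ) [Fact p.Prime] (i : ℕ) (n : Fin i → ℕ)
    {X : Type} [AddCommGroup X] [Module (MonoidAlgebra ℤ_[p] (Hgrp p i n)) X]
    [Module ℤ_[p] X] [IsScalarTower ℤ_[p] (MonoidAlgebra ℤ_[p] (Hgrp p i n)) X]
    (x : X) :
    (∑ σ : Hgrp p i n,
        ((MonoidAlgebra.of ℤ_[p] (Hgrp p i n) σ • x) ⊗ₜ[ℤ_[p]]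
          sTilde p i n (MonoidAlgebra.of ℤ_[p] (Hgrp p i n) σ⁻¹)))
      - (-1 : ℤ_[p]) ^ i •
        ((Dop p i n • x) ⊗ₜ[ℤ_[p]]
          ∏ j : Fin i, (MonoidAlgebra.of ℤ_[p] (Hgrp p i n) (sigmaGen p j) - 1))
      ∈ LinearMap.range (TensorProduct.map (LinearMap.id : X →ₗ[ℤ_[p]] X)
          (((augIdeal p i n * Jcirc p i n).restrictScalars ℤ_[p]).subtype)) := by
  have hDx : (-1 : ℤ_[p]) ^ i • Dop p i n • x
      = ∑ σ : Hgrp p i n, (∏ j, -((Multiplicative.toAdd (σ j)).val : ℤ_[p])) •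
          MonoidAlgebra.of ℤ_[p] (Hgrp p i n) σ • x := by
    rw [Dop_eq_sum, Finset.sum_smul, Finset.smul_sum]
    refine Finset.sum_congr rfl fun σ _ => ?_
    rw [smul_assoc, smul_smul, Finset.prod_neg, Finset.card_univ, Fintype.card_fin]
  rw [TensorProduct.smul_tmul', hDx, TensorProduct.sum_tmul, ← Finset.sum_sub_distrib]
  refine Submodule.sum_mem _ fun σ _ => ?_
  rw [← TensorProduct.smul_tmul' (∏ j, -((Multiplicative.toAdd (σ j)).val : ℤ_[p])),
    ← TensorProduct.tmul_smul, ← TensorProduct.tmul_sub]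
  exact ⟨_ ⊗ₜ ⟨_, sTilde_of_inv_sub_smul_mem p i n σ⟩, rfl⟩
end

section
/- Let O ⊆ O' be an extension of complete DVRs with O' finite free over O, and let R, R' be the group rings R = (O/π^N O)[G] and R' = (O'/π'^{eN} O')[G] for a finite abelian group G, where e is the ramification index so that R' ≅ O' ⊗_O R is free over R with basis the image of an O-basis of O'. Let M be an R-module, κ ∈ M fixed, and f : O' ⊗_O M → R' an R'-linear map. Then there exist R-linear maps g_1, …, g_n : M → R (n = rank_O O') and a basis b_1, …, b_n of R' over R such that f(1 ⊗ κ) = Σ_i b_i · g_i(κ). In particular, the ideal of R' generated by {f(1⊗κ) : f ∈ Hom_{R'}(O'⊗_O M, R')} equals R'·{g(κ) : g ∈ Hom_R(M, R)}. -/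
open TensorProduct

/-! Writing `m ↦ f (1 ⊗ m)` in the basis `b` expresses `f (1 ⊗ κ)` through the coordinate
functionals, which are `R`-linear maps `M → R`. Conversely each `g : M → R` extends to
`R' ⊗[R] M → R'` by base change, with value `g κ` at `1 ⊗ κ`. -/

theorem Module.Basis.exists_linearMap_eq_sum_smul {R N M ι : Type*} [Semiring R]
    [AddCommMonoid N] [Module R N] [AddCommMonoid M] [Module R M] [Fintype ι]
    (b : Module.Basis ι R N) (h : M →ₗ[R] N) :
    ∃ g : ι → (M →ₗ[R] R), ∀ m, h m = ∑ j, g j m • b j :=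
  ⟨fun j => b.coord j ∘ₗ h, fun m => by simp⟩

section BaseChange

variable {R R' M : Type*} [CommSemiring R] [CommSemiring R'] [Algebra R R']
  [AddCommMonoid M] [Module R M]

theorem exists_apply_one_tmul_eq_sum_smul {ι : Type*} [Fintype ι]
    (b : Module.Basis ι R R') (κ : M) (f : R' ⊗[R] M →ₗ[R'] R') :
    ∃ g : ι → (M →ₗ[R] R), f (1 ⊗ₜ κ) = ∑ j, g j κ • b j := by
  obtain ⟨g, hg⟩ := b.exists_linearMap_eq_sum_smul ((LinearMap.liftBaseChangeEquiv R').symm f)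
  exact ⟨g, hg κ⟩

theorem apply_one_tmul_mem_span_algebraMap_dual {ι : Type*} [Fintype ι]
    (b : Module.Basis ι R R') (κ : M) (f : R' ⊗[R] M →ₗ[R'] R') :
    f (1 ⊗ₜ κ) ∈ Ideal.span (algebraMap R R' '' {y | ∃ g : M →ₗ[R] R, y = g κ}) := by
  obtain ⟨g, hg⟩ := exists_apply_one_tmul_eq_sum_smul b κ f
  rw [hg]
  refine Ideal.sum_mem _ fun j _ => ?_
  rw [Algebra.smul_def]
  exact Ideal.mul_mem_right _ _ (Ideal.subset_span ⟨g j κ, ⟨g j, rfl⟩, rfl⟩)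

theorem algebraMap_apply_eq_liftBaseChange_apply (g : M →ₗ[R] R) (κ : M) :
    algebraMap R R' (g κ) = (Algebra.linearMap R R' ∘ₗ g).liftBaseChange R' (1 ⊗ₜ κ) := by
  simp

end BaseChange

theorem tensor_dual_basis_expansion_general
    {R R' : Type*} [CommRing R] [CommRing R'] [Algebra R R']
    {nb : ℕ} (b : Module.Basis (Fin nb) R R')
    {M : Type*} [AddCommGroup M] [Module R M] (κ : M)
    (f : (R' ⊗[R] M) →ₗ[R'] R') :
    (∃ g : Fin nb → (M →ₗ[R] R), f ((1 : R') ⊗ₜ[R] κ) = ∑ j : Fin nb, g j κ • b j) ∧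
    Ideal.span {x : R' | ∃ f' : (R' ⊗[R] M) →ₗ[R'] R', x = f' ((1 : R') ⊗ₜ[R] κ)}
      = Ideal.span ((algebraMap R R') '' {y : R | ∃ g : M →ₗ[R] R, y = g κ}) := by
  refine ⟨exists_apply_one_tmul_eq_sum_smul b κ f, le_antisymm ?_ ?_⟩
  · rw [Ideal.span_le]
    rintro _ ⟨f', rfl⟩
    exact apply_one_tmul_mem_span_algebraMap_dual b κ f'
  · rw [Ideal.span_le]
    rintro _ ⟨_, ⟨g, rfl⟩, rfl⟩
    exact Ideal.subset_span ⟨_, algebraMap_apply_eq_liftBaseChange_apply g κ⟩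

/-- Abstract form (as used for `R = (O/π^N O)[G]` and `R' = (O'/π'^{eN} O')[G] ≅ O' ⊗_O R`):
let `R` be a commutative ring which is injective as a module over itself, and `R'` an
`R`-algebra that is free over `R` with finite basis `b` (the image of an `O`-basis of
`O'`).  Let `M` be an `R`-module, `κ ∈ M`, and `f : R' ⊗_R M → R'` an `R'`-linear map.
Then there exist `R`-linear maps `g₁, …, g_n : M → R` with
`f (1 ⊗ κ) = Σ_i g_i(κ) • b_i`.  In particular, the ideal of `R'` generated by
`{f (1 ⊗ κ)}` over all `f` equals the ideal of `R'` generated by the image of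
`{g(κ) : g ∈ Hom_R(M, R)}`. -/
theorem tensor_dual_basis_expansion
    {R R' : Type*} [CommRing R] [CommRing R'] [Algebra R R']
    [Module.Injective R R] {nb : ℕ} (b : Module.Basis (Fin nb) R R')
    {M : Type*} [AddCommGroup M] [Module R M] (κ : M)
    (f : (R' ⊗[R] M) →ₗ[R'] R') :
    (∃ g : Fin nb → (M →ₗ[R] R), f ((1 : R') ⊗ₜ[R] κ) = ∑ j : Fin nb, g j κ • b j) ∧
    Ideal.span {x : R' | ∃ f' : (R' ⊗[R] M) →ₗ[R'] R', x = f' ((1 : R') ⊗ₜ[R] κ)}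
      = Ideal.span ((algebraMap R R') '' {y : R | ∃ g : M →ₗ[R] R, y = g κ}) :=
  tensor_dual_basis_expansion_general b κ f
end

section
/- Let O be a complete DVR, Λ = O[[T]] or O[[T_1,T_2]], and M a finitely generated torsion Λ-module pseudo-isomorphic to an elementary module E = ⊕_{j=1}^r Λ/d_jΛ with d_{j+1} | d_j for all j. Then for each i ≥ 0, Fitt_{Λ,i}(M) and the principal ideal (∏_{j=i+1}^r d_j) agree up to multiplication by ideals of height at least two; i.e. there exist ideals A, B of Λ of height ≥ 2 with A·Fitt_{Λ,i}(M) ⊆ (∏_{j>i} d_j) and B·(∏_{j>i} d_j) ⊆ Fitt_{Λ,i}(M). In particular, the equivalence classes of the higher Fitting ideals determine the pseudo-isomorphism class of M. -/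
/-- The ideal `I` has height at least `n`. -/
def heightGE {R : Type*} [CommRing R] (I : Ideal R) (n : ℕ) : Prop :=
  ∀ P : Ideal R, P.IsPrime → I ≤ P →
    ∃ c : Fin n → Ideal R, (∀ j, (c j).IsPrime) ∧ StrictMono c ∧ ∀ j, c j < P

open Finset Matrix

section Height

variable {R : Type*} [CommRing R] {I J : Ideal R} {n : ℕ}

theorem heightGE.of_le_radical (hI : heightGE I n) (hIJ : I ≤ J.radical) : heightGE J n :=
  fun P hP hJP => hI P hP (hIJ.trans (hP.radical_le_iff.mpr hJP))

theorem heightGE.mul (hI : heightGE I n) (hJ : heightGE J n) : heightGE (I * J) n :=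
  fun P hP hIJP => (hP.mul_le.mp hIJP).elim (hI P hP) (hJ P hP)

end Height

theorem Ideal.colon_mul_le {R : Type*} [CommSemiring R] (I J : Ideal R) : I.colon J * J ≤ I :=
  Submodule.mul_le.mpr fun _ hx _ hy => Submodule.mem_colon.mp hx _ hy

theorem Finset.prod_dvd_prod_of_isUpperSet {α M : Type*} [LinearOrder α] [CommMonoid M]
    {d : α → M} (hd : ∀ j k, j ≤ k → d k ∣ d j) {T B : Finset α}
    (hT : IsUpperSet (T : Set α)) (hTB : #T ≤ #B) : ∏ j ∈ T, d j ∣ ∏ j ∈ B, d j := by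
  classical
  induction T using Finset.induction_on_min generalizing B with
  | empty => simp
  | insert a T haT ih =>
    have haT' : a ∉ T := fun h => lt_irrefl a (haT a h)
    rw [card_insert_of_notMem haT'] at hTB
    have hB : B.Nonempty := by rw [← Finset.card_pos]; omega
    have hTupper : IsUpperSet (T : Set α) := fun x y hxy hx =>
      (mem_insert.mp (hT hxy (mem_insert_of_mem hx))).resolve_left
        (ne_of_gt (lt_of_lt_of_le (haT x hx) hxy))
    by_cases hmin : B.min' hB ≤ a
    · rw [prod_insert haT', ← mul_prod_erase B d (B.min'_mem hB)]
      refine mul_dvd_mul (hd _ _ hmin) (ih hTupper ?_)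
      rw [card_erase_of_mem (B.min'_mem hB)]
      omega
    · -- then `B ⊆ T`, which is too small
      have hBT : B ⊆ T := fun x hx => by
        have hax : a < x := lt_of_lt_of_le (not_le.mp hmin) (B.min'_le x hx)
        exact (mem_insert.mp (hT hax.le (mem_insert_self a T))).resolve_left (ne_of_gt hax)
      have := card_le_card hBT
      omega

theorem Fin.card_filter_le_val (n m : ℕ) : #{j : Fin n | m ≤ (j : ℕ)} = n - m := by
  have h := card_filter_add_card_filter_not (s := (univ : Finset (Fin n))) (fun j => m ≤ (j : ℕ))
  simp only [not_le, Fin.card_filter_val_lt, card_univ, Fintype.card_fin] at h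
  omega

theorem Fin.prod_filter_le_dvd_prod {M : Type*} [CommMonoid M] {r : ℕ} {d : Fin r → M}
    (hd : ∀ j k : Fin r, j ≤ k → d k ∣ d j) {i : ℕ} {B : Finset (Fin r)} (hB : r - i ≤ #B) :
    ∏ j ∈ univ.filter (fun j : Fin r => i ≤ (j : ℕ)), d j ∣ ∏ j ∈ B, d j :=
  prod_dvd_prod_of_isUpperSet hd (fun _ _ hjk hj => by simp_all; omega)
    (by rwa [Fin.card_filter_le_val])

/-- A weak form of Cauchy–Binet: each term of the expansion of the determinant contains the
values of `σ` at `card ι` distinct indices. -/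
theorem Matrix.det_mul_diagonal_mul_mem {R ι κ : Type*} [CommRing R] [Fintype ι] [DecidableEq ι]
    [Fintype κ] [DecidableEq κ] (A : Matrix ι κ R) (σ : κ → R) (B : Matrix κ ι R) {I : Ideal R}
    (hσ : ∀ p : ι → κ, Function.Injective p → ∏ t, σ (p t) ∈ I) :
    (A * diagonal σ * B).det ∈ I := by
  have hrows : (A * diagonal σ * B).det
      = (detRowAlternating (R := R) (n := ι)).toMultilinearMap
          fun t => ∑ u, (A t u * σ u) • B u := by
    congr 2
    ext t t'
    rw [Matrix.mul_apply]
    simp [Matrix.mul_diagonal, Finset.sum_apply]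
  rw [hrows, MultilinearMap.map_sum]
  refine Ideal.sum_mem _ fun p _ => ?_
  rw [MultilinearMap.map_smul_univ, Finset.prod_mul_distrib, mul_smul]
  by_cases hp : Function.Injective p
  · exact Ideal.mul_mem_left _ _ (Ideal.mul_mem_right _ _ (hσ p hp))
  · obtain ⟨t₁, t₂, hpt, hne⟩ := Function.not_injective_iff.mp hp
    simp [AlternatingMap.map_eq_zero_of_eq _ (fun t => B (p t)) (congrArg B hpt) hne]

theorem LinearMap.exists_comp_eq_of_range_le {R M N P : Type*} [Semiring R] [AddCommMonoid M]
    [Module R M] [AddCommMonoid N] [Module R N] [AddCommMonoid P] [Module R P]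
    [Module.Projective R P] (f : M →ₗ[R] N) (ψ : P →ₗ[R] N) (hψ : range ψ ≤ range f) :
    ∃ X : P →ₗ[R] M, f ∘ₗ X = ψ := by
  obtain ⟨X, hX⟩ := Module.projective_lifting_property f.rangeRestrict
    (ψ.codRestrict (range f) fun p => hψ ⟨p, rfl⟩) f.surjective_rangeRestrict
  exact ⟨X, by ext p; simpa using congrArg Subtype.val (LinearMap.congr_fun hX p)⟩

theorem LinearMap.smul_mem_range_of_mem_annihilator {R M N : Type*} [Ring R]
    [AddCommGroup M] [Module R M] [AddCommGroup N] [Module R N] (f : M →ₗ[R] N) {b : R}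
    (hb : b ∈ Module.annihilator R (N ⧸ range f)) (e : N) : b • e ∈ range f := by
  rw [Submodule.annihilator_quotient, Submodule.mem_colon] at hb
  exact hb e trivial

section Fitting

variable {R M : Type*} [CommRing R] [AddCommGroup M] [Module R M] {i : ℕ}

theorem fittingIdeal_le {J : Ideal R}
    (hJ : ∀ (n : ℕ) (g : (Fin n → R) →ₗ[R] M), Function.Surjective g →
      ∀ (v : Matrix (Fin (n - i)) (Fin n) R) (c : Fin (n - i) → Fin n),
        (∀ a, g (v a) = 0) → (v.submatrix id c).det ∈ J) :
    fittingIdeal R M i ≤ J :=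
  iSup_le fun n => iSup_le fun g => iSup_le fun hg => Ideal.span_le.mpr <| by
    rintro x ⟨v, c, hv, rfl⟩
    exact hJ n g hg v c hv

theorem det_submatrix_mem_fittingIdeal {ι κ : Type*} [Fintype ι] [DecidableEq ι] [Fintype κ]
    (g : (κ → R) →ₗ[R] M) (hg : Function.Surjective g) (v : Matrix ι κ R)
    (hv : ∀ a, g (v a) = 0) (c : ι → κ) (hcard : Fintype.card ι = Fintype.card κ - i) :
    (v.submatrix id c).det ∈ fittingIdeal R M i := by
  set eκ := Fintype.equivFin κ
  set eι := (Fintype.equivFin ι).trans (finCongr hcard)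
  set g' := g ∘ₗ LinearMap.funLeft R R eκ
  have hg' : Function.Surjective g' :=
    hg.comp (LinearMap.funLeft_surjective_of_injective _ _ _ eκ.injective)
  have hle : Ideal.span {x | ∃ (v : Fin (Fintype.card κ - i) → Fin (Fintype.card κ) → R)
      (c : Fin (Fintype.card κ - i) → Fin (Fintype.card κ)),
        (∀ a, g' (v a) = 0) ∧ x = Matrix.det (Matrix.of fun a b => v a (c b))}
      ≤ fittingIdeal R M i :=
    le_iSup_of_le _ (le_iSup_of_le g' (le_iSup_of_le hg' le_rfl))
  have hrow : ∀ a, LinearMap.funLeft R R eκ (v.submatrix eι.symm eκ.symm a) = v (eι.symm a) :=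
    fun a => by ext; simp
  have hmem := hle <| Ideal.subset_span
    ⟨v.submatrix eι.symm eκ.symm, eκ ∘ c ∘ eι.symm, fun a => by simp [g', hrow, hv], rfl⟩
  rw [← Matrix.det_submatrix_equiv_self eι.symm]
  convert hmem using 3
  ext a b
  simp

end Fitting

section Elementary

variable {Λ : Type*} [CommRing Λ] {r : ℕ}

abbrev ElementaryModule (d : Fin r → Λ) : Type _ := (j : Fin r) → Λ ⧸ Ideal.span {d j}

namespace ElementaryModule

def mkQ (d : Fin r → Λ) : (Fin r → Λ) →ₗ[Λ] ElementaryModule d :=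
  LinearMap.piMap fun j => (Ideal.span {d j}).mkQ

variable {d : Fin r → Λ}

theorem mkQ_surjective : Function.Surjective (mkQ d) := fun e => by
  choose w hw using fun j => Ideal.Quotient.mk_surjective (e j)
  exact ⟨w, funext hw⟩

theorem mkQ_eq_zero_iff {w : Fin r → Λ} : mkQ d w = 0 ↔ ∀ j, d j ∣ w j := by
  simp [mkQ, funext_iff, Ideal.Quotient.eq_zero_iff_mem, Ideal.mem_span_singleton]

theorem exists_matrix_lift {κ : Type*} [Fintype κ] [DecidableEq κ]
    (h : (κ → Λ) →ₗ[Λ] ElementaryModule d) :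
    ∃ P : Matrix κ (Fin r) Λ, ∀ y, h y = mkQ d (y ᵥ* P) := by
  obtain ⟨Φ, hΦ⟩ := Module.projective_lifting_property (mkQ d) h mkQ_surjective
  refine ⟨(LinearMap.toMatrix' Φ)ᵀ, fun y => ?_⟩
  rw [vecMul_transpose, LinearMap.toMatrix'_mulVec, ← LinearMap.comp_apply, hΦ]

theorem exists_eq_mul_diagonal_mul {ι κ : Type*} [Fintype κ] [DecidableEq κ]
    (h : (κ → Λ) →ₗ[Λ] ElementaryModule d) (P : Matrix κ (Fin r) Λ)
    (hP : ∀ y, h y = mkQ d (y ᵥ* P)) (ρ : Matrix ι (κ ⊕ Fin r) Λ)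
    (hρ : ∀ t, h (ρ t ∘ Sum.inl) + mkQ d (ρ t ∘ Sum.inr) = 0) :
    ∃ C : Matrix ι (κ ⊕ Fin r) Λ, ρ = C * (diagonal (Sum.elim 1 d) * fromBlocks 1 (-P) 0 1) := by
  have hdvd : ∀ t j, d j ∣ (ρ t ∘ Sum.inl ᵥ* P + ρ t ∘ Sum.inr) j := fun t => by
    rw [← mkQ_eq_zero_iff, map_add, ← hP]
    exact hρ t
  choose q hq using hdvd
  refine ⟨of fun t => Sum.elim (ρ t ∘ Sum.inl) (q t), ?_⟩
  ext t (k | j)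
  · rw [Matrix.mul_apply]
    simp [Fintype.sum_sum_type, diagonal_mul, one_apply]
  · have := hq t j
    simp only [Pi.add_apply, vecMul, dotProduct, Function.comp_apply] at this
    rw [Matrix.mul_apply]
    simp [Fintype.sum_sum_type, diagonal_mul, one_apply]
    linear_combination this

theorem prod_filter_le_dvd_prod_sumElim_one (hd : ∀ j k : Fin r, j ≤ k → d k ∣ d j)
    {ι κ : Type*} [Fintype ι] [Fintype κ] {i : ℕ}
    (hcard : Fintype.card κ ≤ Fintype.card ι + i) {p : ι ⊕ Fin r → κ ⊕ Fin r}
    (hp : Function.Injective p) :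
    ∏ j ∈ univ.filter (fun j : Fin r => i ≤ (j : ℕ)), d j ∣ ∏ t, Sum.elim 1 d (p t) := by
  set S := univ.map ⟨p, hp⟩
  have hS : ∏ t, Sum.elim 1 d (p t) = ∏ j ∈ S.toRight, d j := by
    have : ∏ u ∈ S, Sum.elim 1 d u = ∏ j ∈ S.toRight, d j := by
      rw [prod_sum_eq_prod_toLeft_mul_prod_toRight]
      simp
    rw [← this, prod_map]
    rfl
  have hcardS : #S.toLeft + #S.toRight = Fintype.card ι + r := by
    simp [S, card_toLeft_add_card_toRight]
  have hleft : #S.toLeft ≤ Fintype.card κ := card_le_univ _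
  rw [hS]
  exact Fin.prod_filter_le_dvd_prod hd (by omega)

theorem pow_mul_det_mem_span (hd : ∀ j k : Fin r, j ≤ k → d k ∣ d j)
    {ι κ : Type*} [Fintype ι] [DecidableEq ι] [Fintype κ] [DecidableEq κ]
    (h : (κ → Λ) →ₗ[Λ] ElementaryModule d) {b : Λ} (hb : ∀ e, b • e ∈ LinearMap.range h)
    (v : Matrix ι κ Λ) (hv : ∀ a, h (v a) = 0) (c : ι → κ) {i : ℕ}
    (hcard : Fintype.card κ ≤ Fintype.card ι + i) :
    b ^ r * (v.submatrix id c).det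
      ∈ Ideal.span {∏ j ∈ univ.filter (fun j : Fin r => i ≤ (j : ℕ)), d j} := by
  obtain ⟨P, hP⟩ := exists_matrix_lift h
  choose W hW using fun j => hb (mkQ d (Pi.single j 1))
  set ρ : Matrix (ι ⊕ Fin r) (κ ⊕ Fin r) Λ := fromBlocks v 0 (-of W) (b • 1)
  have hρ : ∀ t, h (ρ t ∘ Sum.inl) + mkQ d (ρ t ∘ Sum.inr) = 0 := by
    rintro (a | j)
    · have hy : ρ (Sum.inl a) ∘ Sum.inl = v a := rfl
      have hz : ρ (Sum.inl a) ∘ Sum.inr = 0 := rfl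
      rw [hy, hz, hv, map_zero, add_zero]
    · have hy : ρ (Sum.inr j) ∘ Sum.inl = -W j := rfl
      have hz : ρ (Sum.inr j) ∘ Sum.inr = b • Pi.single j 1 := by
        ext j'
        simp [ρ, one_apply, Pi.single_apply, eq_comm]
      rw [hy, hz, map_neg, map_smul, hW, neg_add_cancel]
  obtain ⟨C, hC⟩ := exists_eq_mul_diagonal_mul h P hP ρ hρ
  have hdet : (ρ.submatrix id (Sum.map c id)).det = (v.submatrix id c).det * b ^ r := by
    have : ρ.submatrix id (Sum.map c id)
        = fromBlocks (v.submatrix id c) 0 (-(of W).submatrix id c) (b • 1) := by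
      ext (_ | _) (_ | _) <;> rfl
    rw [this, det_fromBlocks_zero₁₂, det_smul, det_one, mul_one, Fintype.card_fin]
  rw [mul_comm, ← hdet, hC, submatrix_mul _ _ _ id _ Function.bijective_id,
    submatrix_mul _ _ _ id _ Function.bijective_id, submatrix_id_id, submatrix_id_id,
    ← Matrix.mul_assoc]
  exact det_mul_diagonal_mul_mem _ _ _ fun p hp =>
    Ideal.mem_span_singleton.mpr (prod_filter_le_dvd_prod_sumElim_one hd hcard hp)

end ElementaryModule

open ElementaryModule

variable {d : Fin r → Λ} {M : Type*} [AddCommGroup M] [Module Λ M]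

theorem pow_mul_mem_span_of_mem_fittingIdeal (hd : ∀ j k : Fin r, j ≤ k → d k ∣ d j)
    (f : M →ₗ[Λ] ElementaryModule d) {b : Λ} (hb : ∀ e, b • e ∈ LinearMap.range f) {i : ℕ}
    {x : Λ} (hx : x ∈ fittingIdeal Λ M i) :
    b ^ r * x ∈ Ideal.span {∏ j ∈ univ.filter (fun j : Fin r => i ≤ (j : ℕ)), d j} := by
  suffices fittingIdeal Λ M i ≤ (Ideal.span {_}).colon (Ideal.span {b ^ r}) by
    simpa [mul_comm] using Ideal.mem_colon_span_singleton.mp (this hx)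
  refine fittingIdeal_le fun n g hg v c hv => Ideal.mem_colon_span_singleton.mpr ?_
  rw [mul_comm]
  refine pow_mul_det_mem_span hd (f ∘ₗ g) (fun e => ?_) v (fun a => by simp [hv a]) c
    (by simp only [Fintype.card_fin]; omega)
  rw [LinearMap.range_comp_of_range_eq_top f (LinearMap.range_eq_top.mpr hg)]
  exact hb e

theorem exists_surjective_apply_fromBlocks_eq_zero (f : M →ₗ[Λ] ElementaryModule d) {s : ℕ}
    (g : (Fin s → Λ) →ₗ[Λ] M) (hg : Function.Surjective g) {a b : Λ}
    (ha : a ∈ Module.annihilator Λ (LinearMap.ker f)) (hb : ∀ e, b • e ∈ LinearMap.range f) :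
    ∃ (L : (Fin s ⊕ Fin r → Λ) →ₗ[Λ] M) (P : Matrix (Fin s) (Fin r) Λ),
      Function.Surjective L ∧ ∀ t, L
        (fromBlocks (diagonal fun _ => a * b) (-(a • P)) 0 (diagonal fun j => a * d j) t) = 0 := by
  have hker : ∀ m, f m = 0 → a • m = 0 := fun m hm =>
    congrArg Subtype.val (Module.mem_annihilator.mp ha ⟨m, hm⟩)
  obtain ⟨P, hP⟩ := exists_matrix_lift (f ∘ₗ g)
  obtain ⟨X, hX⟩ := LinearMap.exists_comp_eq_of_range_le f (b • mkQ d) <| by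
    rintro _ ⟨w, rfl⟩
    exact hb _
  set L := g.coprod X ∘ₗ (LinearEquiv.sumArrowLequivProdArrow (Fin s) (Fin r) Λ Λ).toLinearMap
  have hL : ∀ w, L w = g (w ∘ Sum.inl) + X (w ∘ Sum.inr) := fun w => rfl
  refine ⟨L, P, fun m => ?_, ?_⟩
  · obtain ⟨y, rfl⟩ := hg m
    exact ⟨Sum.elim y 0, by rw [hL, Sum.elim_comp_inl, Sum.elim_comp_inr, map_zero, add_zero]⟩
  set Ξ : Matrix (Fin s ⊕ Fin r) (Fin s ⊕ Fin r) Λ :=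
    fromBlocks (diagonal fun _ => a * b) (-(a • P)) 0 (diagonal fun j => a * d j)
  rintro (k | j)
  · have hrel : f (b • g (Pi.single k 1) - X (P k)) = 0 := by
      rw [map_sub, map_smul, ← LinearMap.comp_apply f g, hP, ← LinearMap.comp_apply f X, hX,
        single_one_vecMul, LinearMap.smul_apply, row, sub_self]
    have hy : Ξ (Sum.inl k) ∘ Sum.inl = (a * b) • Pi.single k 1 := by
      ext k'
      simp [Ξ, diagonal, Pi.single_apply, eq_comm]
    have hz : Ξ (Sum.inl k) ∘ Sum.inr = -(a • P k) := rfl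
    rw [hL, hy, hz, map_smul, map_neg, map_smul, ← hker _ hrel, smul_sub, mul_smul,
      sub_eq_add_neg]
  · have hrel : f (X (d j • Pi.single j 1)) = 0 := by
      rw [← LinearMap.comp_apply f X, hX, LinearMap.smul_apply,
        (mkQ_eq_zero_iff (d := d)).mpr, smul_zero]
      intro j'
      by_cases hj : j' = j
      · subst hj; simp
      · simp [hj]
    have hy : Ξ (Sum.inr j) ∘ Sum.inl = 0 := rfl
    have hz : Ξ (Sum.inr j) ∘ Sum.inr = a • d j • Pi.single j 1 := by
      ext j'
      simp [Ξ, diagonal, Pi.single_apply, eq_comm]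
    rw [hL, hy, hz, map_zero, zero_add, map_smul, hker _ hrel]

theorem mul_pow_mul_mem_fittingIdeal (f : M →ₗ[Λ] ElementaryModule d) {s : ℕ}
    (g : (Fin s → Λ) →ₗ[Λ] M) (hg : Function.Surjective g) {a b : Λ}
    (ha : a ∈ Module.annihilator Λ (LinearMap.ker f)) (hb : ∀ e, b • e ∈ LinearMap.range f)
    (i : ℕ) :
    (a * b) ^ (s + r) * ∏ j ∈ univ.filter (fun j : Fin r => i ≤ (j : ℕ)), d j
      ∈ fittingIdeal Λ M i := by
  obtain ⟨L, P, hL, hΞ⟩ := exists_surjective_apply_fromBlocks_eq_zero f g hg ha hb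
  set Ξ : Matrix (Fin s ⊕ Fin r) (Fin s ⊕ Fin r) Λ :=
    fromBlocks (diagonal fun _ => a * b) (-(a • P)) 0 (diagonal fun j => a * d j)
  set c : {k : Fin s // i - r ≤ (k : ℕ)} ⊕ {j : Fin r // i ≤ (j : ℕ)} → Fin s ⊕ Fin r :=
    Sum.map Subtype.val Subtype.val
  have hcard : Fintype.card ({k : Fin s // i - r ≤ (k : ℕ)} ⊕ {j : Fin r // i ≤ (j : ℕ)})
      = Fintype.card (Fin s ⊕ Fin r) - i := by
    simp only [Fintype.card_sum, Fintype.card_subtype, Fin.card_filter_le_val, Fintype.card_fin]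
    omega
  have hdet : (Ξ.submatrix c c).det = (a * b) ^ (s - (i - r)) * a ^ (r - i)
      * ∏ j ∈ univ.filter (fun j : Fin r => i ≤ (j : ℕ)), d j := by
    have hblocks : Ξ.submatrix c c = fromBlocks
        ((diagonal fun _ => a * b).submatrix Subtype.val Subtype.val)
        ((-(a • P)).submatrix Subtype.val Subtype.val) 0
        ((diagonal fun j => a * d j).submatrix Subtype.val Subtype.val) := by
      ext (_ | _) (_ | _) <;> rfl
    rw [hblocks, det_fromBlocks_zero₂₁, submatrix_diagonal _ _ Subtype.val_injective,
      submatrix_diagonal _ _ Subtype.val_injective, det_diagonal, det_diagonal, mul_assoc]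
    simp only [Function.comp_apply, prod_const, prod_mul_distrib, card_univ,
      Fintype.card_subtype, Fin.card_filter_le_val]
    rw [prod_subtype (p := fun j : Fin r => i ≤ (j : ℕ)) _ (by simp) d]
  have hmem := det_submatrix_mem_fittingIdeal L hL (Ξ.submatrix c id) (fun t => hΞ (c t)) c hcard
  rw [submatrix_submatrix, Function.comp_id, Function.id_comp, hdet] at hmem
  refine Ideal.mem_of_dvd _ (mul_dvd_mul_right ?_ _) hmem
  calc (a * b) ^ (s - (i - r)) * a ^ (r - i)
      ∣ (a * b) ^ (s - (i - r)) * (a * b) ^ (r - i) :=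
        mul_dvd_mul_left _ (by rw [mul_pow]; exact dvd_mul_right _ _)
    _ ∣ (a * b) ^ (s + r) := by rw [← pow_add]; exact pow_dvd_pow _ (by omega)

end Elementary

theorem fitt_elementary_up_to_pseudo_iso_general
    {O : Type*} [CommRing O]
    (v : ℕ)
    {M : Type*} [AddCommGroup M] [Module (MvPowerSeries (Fin v) O) M]
    [Module.Finite (MvPowerSeries (Fin v) O) M]
    {r : ℕ} (d : Fin r → MvPowerSeries (Fin v) O)
    (hd : ∀ j k : Fin r, j ≤ k → d k ∣ d j)
    (f : M →ₗ[MvPowerSeries (Fin v) O]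
      ((j : Fin r) → MvPowerSeries (Fin v) O ⧸ Ideal.span {d j}))
    (hker : heightGE (Module.annihilator (MvPowerSeries (Fin v) O)
      (LinearMap.ker f)) 2)
    (hcoker : heightGE (Module.annihilator (MvPowerSeries (Fin v) O)
      ((((j : Fin r) → MvPowerSeries (Fin v) O ⧸ Ideal.span {d j}) ⧸
        LinearMap.range f))) 2)
    (i : ℕ) :
    ∃ A B : Ideal (MvPowerSeries (Fin v) O), heightGE A 2 ∧ heightGE B 2 ∧
      A * fittingIdeal (MvPowerSeries (Fin v) O) M i
        ≤ Ideal.span {∏ j ∈ Finset.univ.filter (fun j : Fin r => i ≤ (j : ℕ)), d j} ∧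
      B * Ideal.span {∏ j ∈ Finset.univ.filter (fun j : Fin r => i ≤ (j : ℕ)), d j}
        ≤ fittingIdeal (MvPowerSeries (Fin v) O) M i := by
  obtain ⟨s, g, hg⟩ := Module.Finite.exists_fin' (MvPowerSeries (Fin v) O) M
  set D := ∏ j ∈ Finset.univ.filter (fun j : Fin r => i ≤ (j : ℕ)), d j
  set F := fittingIdeal (MvPowerSeries (Fin v) O) M i
  refine ⟨(Ideal.span {D}).colon F, F.colon (Ideal.span {D}), hcoker.of_le_radical ?_,
    (hker.mul hcoker).of_le_radical ?_, Ideal.colon_mul_le _ _, Ideal.colon_mul_le _ _⟩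
  · intro b hb
    exact ⟨r, Submodule.mem_colon.mpr fun x hx =>
      pow_mul_mem_span_of_mem_fittingIdeal hd f (f.smul_mem_range_of_mem_annihilator hb) hx⟩
  · refine Ideal.mul_le.mpr fun a ha b hb => ⟨s + r, ?_⟩
    rw [Ideal.mem_colon_span_singleton]
    exact mul_pow_mul_mem_fittingIdeal f g hg ha (f.smul_mem_range_of_mem_annihilator hb) i

/-- Let `O` be a complete DVR, `Λ = O[[T]]` or `O[[T₁,T₂]]` (i.e. `Λ = O[[T₁,…,T_v]]` with
`v = 1` or `v = 2`), and `M` a finitely generated torsion `Λ`-module pseudo-isomorphic to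
an elementary module `E = ⊕_{j=1}^r Λ/d_j Λ` with `d_{j+1} ∣ d_j` (a pseudo-isomorphism
`f : M → E` has pseudo-null — i.e. annihilator of height `≥ 2` — kernel and cokernel).
Then for each `i ≥ 0`, `Fitt_{Λ,i}(M)` and `(∏_{j>i} d_j)` agree up to multiplication by
ideals of height at least two: there are ideals `A, B` of `Λ` of height `≥ 2` with
`A·Fitt_{Λ,i}(M) ⊆ (∏_{j>i} d_j)` and `B·(∏_{j>i} d_j) ⊆ Fitt_{Λ,i}(M)`. -/
theorem fitt_elementary_up_to_pseudo_iso
    {O : Type*} [CommRing O] [IsDomain O] [IsDiscreteValuationRing O]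
    [IsAdicComplete (IsLocalRing.maximalIdeal O) O]
    (v : ℕ) (hv : v = 1 ∨ v = 2)
    {M : Type*} [AddCommGroup M] [Module (MvPowerSeries (Fin v) O) M]
    [Module.Finite (MvPowerSeries (Fin v) O) M]
    (htor : Module.IsTorsion (MvPowerSeries (Fin v) O) M)
    {r : ℕ} (d : Fin r → MvPowerSeries (Fin v) O)
    (hd : ∀ j k : Fin r, j ≤ k → d k ∣ d j)
    (f : M →ₗ[MvPowerSeries (Fin v) O]
      ((j : Fin r) → MvPowerSeries (Fin v) O ⧸ Ideal.span {d j}))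
    (hker : heightGE (Module.annihilator (MvPowerSeries (Fin v) O)
      (LinearMap.ker f)) 2)
    (hcoker : heightGE (Module.annihilator (MvPowerSeries (Fin v) O)
      ((((j : Fin r) → MvPowerSeries (Fin v) O ⧸ Ideal.span {d j}) ⧸
        LinearMap.range f))) 2)
    (i : ℕ) :
    ∃ A B : Ideal (MvPowerSeries (Fin v) O), heightGE A 2 ∧ heightGE B 2 ∧
      A * fittingIdeal (MvPowerSeries (Fin v) O) M i
        ≤ Ideal.span {∏ j ∈ Finset.univ.filter (fun j : Fin r => i ≤ (j : ℕ)), d j} ∧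
      B * Ideal.span {∏ j ∈ Finset.univ.filter (fun j : Fin r => i ≤ (j : ℕ)), d j}
        ≤ fittingIdeal (MvPowerSeries (Fin v) O) M i :=
  fitt_elementary_up_to_pseudo_iso_general v d hd f hker hcoker i
end

section
/- Let O be a complete DVR with uniformizer π, N_1 ≤ N_2 positive integers, and let ν : O/π^{N_1}O → O/π^{N_2}O be the injection a ↦ a·π^{N_2−N_1}. Let G be a profinite group and ρ a character of G valued in O^× with H^0(G, (O/πO)(ρ)) = 0. Then the induced map H^1(ν) : H^1(G, (O/π^{N_1}O)(ρ)) → H^1(G, (O/π^{N_2}O)(ρ)) is injective, and its image equals the π^{N_1}-torsion submodule paired appropriately: H^1(G, (O/π^{N_1}O)(ρ)) ≅ H^1(G, (O/π^{N_2}O)(ρ))[π^{N_1}]. -/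
/-!
Write `M_N = O/π^N`. Vanishing of `H⁰` on `O/π` passes to every `M_N` by induction on `N`,
peeling off one factor of `π` at a time. As `π` is a non-zero-divisor, the image of `ν` is
exactly the `π^{N₁}`-torsion of `M_{N₂}`. Hence if the coboundary `g ↦ ρ(g)w - w` lies in the
image of `ν`, then `π^{N₁} w` is `G`-fixed, so zero, so `w` itself lies in the image of `ν`.
This gives injectivity of `H¹(ν)`. Applied with `N₂ - N₁` in place of `N₁`, it shows that a
cocycle `F` with `π^{N₁} F` a coboundary `δw` has `w = π^{N₁} v`; then `F - δv` is
`π^{N₁}`-torsion, hence has values in the image of `ν`.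
-/

/-- The injection `ν : O/π^{N₁} O → O/π^{N₂} O`, `a ↦ a·π^{N₂-N₁}`. -/
noncomputable def nuMap {O : Type*} [CommRing O] (π : O) (N₁ N₂ : ℕ) (h : N₁ ≤ N₂) :
    (O ⧸ Ideal.span {π ^ N₁}) →ₗ[O] O ⧸ Ideal.span {π ^ N₂} :=
  Submodule.liftQ (Ideal.span {π ^ N₁} : Ideal O)
    ((Ideal.span {π ^ N₂} : Ideal O).mkQ.comp
      ((π ^ (N₂ - N₁)) • (LinearMap.id : O →ₗ[O] O)))
    (by
      intro x hx
      obtain ⟨c, rfl⟩ := Ideal.mem_span_singleton'.mp hx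
      simp only [LinearMap.mem_ker, LinearMap.comp_apply, LinearMap.smul_apply,
        LinearMap.id_apply, Submodule.mkQ_apply, Submodule.Quotient.mk_eq_zero]
      have hmul : π ^ (N₂ - N₁) • (c * π ^ N₁) = π ^ N₂ * c := by
        rw [smul_eq_mul]
        calc π ^ (N₂ - N₁) * (c * π ^ N₁) = c * (π ^ (N₂ - N₁) * π ^ N₁) := by ring
          _ = c * π ^ N₂ := by rw [← pow_add, Nat.sub_add_cancel h]
          _ = π ^ N₂ * c := by ring
      rw [hmul]
      exact Ideal.mul_mem_right _ _ (Ideal.mem_span_singleton_self _))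

section

open Submodule.Quotient

variable {O : Type*} [CommRing O]

theorem nuMap_mk (π : O) {N₁ N₂ : ℕ} (h : N₁ ≤ N₂) (a : O) :
    nuMap π N₁ N₂ h (mk a) = (π ^ (N₂ - N₁) : O) • (mk a : O ⧸ Ideal.span {π ^ N₂}) :=
  mk_smul (Ideal.span {π ^ N₂}) (π ^ (N₂ - N₁)) a

theorem pow_smul_quotient_span_pow (π : O) (N : ℕ) (x : O ⧸ Ideal.span {π ^ N}) :
    (π ^ N : O) • x = 0 := by
  obtain ⟨a, rfl⟩ := mk_surjective _ x
  rw [← mk_smul, mk_eq_zero, smul_eq_mul]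
  exact Ideal.mul_mem_right _ _ (Ideal.mem_span_singleton_self _)

variable [IsDomain O] {π : O}

theorem mem_span_pow_of_pow_mul_mem (hπ : π ≠ 0) {m k : ℕ} {a : O}
    (ha : π ^ m * a ∈ Ideal.span {π ^ (m + k)}) : a ∈ Ideal.span {π ^ k} := by
  rw [Ideal.mem_span_singleton, pow_add] at ha
  rw [Ideal.mem_span_singleton]
  exact (mul_dvd_mul_iff_left (pow_ne_zero m hπ)).mp ha

theorem nuMap_injective (hπ : π ≠ 0) {N₁ N₂ : ℕ} (h : N₁ ≤ N₂) :
    Function.Injective (nuMap π N₁ N₂ h) := by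
  rw [← LinearMap.ker_eq_bot, LinearMap.ker_eq_bot']
  obtain ⟨k, rfl⟩ := Nat.exists_eq_add_of_le' h
  intro x hx
  obtain ⟨a, rfl⟩ := mk_surjective _ x
  rw [nuMap_mk, Nat.add_sub_cancel, ← mk_smul, mk_eq_zero, smul_eq_mul] at hx
  exact (mk_eq_zero _).mpr (mem_span_pow_of_pow_mul_mem hπ hx)

theorem mem_range_nuMap_iff (hπ : π ≠ 0) {N₁ N₂ : ℕ} (h : N₁ ≤ N₂)
    (x : O ⧸ Ideal.span {π ^ N₂}) :
    x ∈ LinearMap.range (nuMap π N₁ N₂ h) ↔ (π ^ N₁ : O) • x = 0 := by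
  obtain ⟨k, rfl⟩ := Nat.exists_eq_add_of_le h
  constructor
  · rintro ⟨y, rfl⟩
    obtain ⟨a, rfl⟩ := mk_surjective _ y
    rw [nuMap_mk, smul_smul, ← pow_add, Nat.add_sub_cancel_left, pow_smul_quotient_span_pow]
  · intro hx
    obtain ⟨a, rfl⟩ := mk_surjective _ x
    rw [← mk_smul, mk_eq_zero, smul_eq_mul] at hx
    obtain ⟨c, rfl⟩ := Ideal.mem_span_singleton.mp (mem_span_pow_of_pow_mul_mem hπ hx)
    exact ⟨mk c, by rw [nuMap_mk, Nat.add_sub_cancel_left, ← mk_smul, smul_eq_mul]⟩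

variable {G : Type*} [Group G] (ρ : G →* Oˣ)

theorem mem_span_pow_of_forall_units_mul_sub_mem (hπ : π ≠ 0)
    (hH0 : ∀ w : O ⧸ Ideal.span {π}, (∀ g : G, (ρ g : O) • w = w) → w = 0) (N : ℕ) {a : O}
    (ha : ∀ g : G, (ρ g : O) * a - a ∈ Ideal.span {π ^ N}) : a ∈ Ideal.span {π ^ N} := by
  induction N generalizing a with
  | zero => simp
  | succ N ih =>
    have ha₁ : a ∈ Ideal.span {π} := by
      refine (mk_eq_zero _).mp (hH0 _ fun g => ?_)
      rw [← mk_smul, Submodule.Quotient.eq, smul_eq_mul]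
      exact Ideal.span_singleton_le_span_singleton.mpr (dvd_pow_self π N.succ_ne_zero) (ha g)
    obtain ⟨b, rfl⟩ := Ideal.mem_span_singleton.mp ha₁
    have hb : b ∈ Ideal.span {π ^ N} := ih fun g => by
      refine mem_span_pow_of_pow_mul_mem (m := 1) (k := N) hπ ?_
      rw [add_comm 1 N]
      convert ha g using 1
      ring
    rw [pow_succ', Ideal.mem_span_singleton]
    exact mul_dvd_mul_left π (Ideal.mem_span_singleton.mp hb)

theorem eq_zero_of_forall_smul_eq_self (hπ : π ≠ 0)
    (hH0 : ∀ w : O ⧸ Ideal.span {π}, (∀ g : G, (ρ g : O) • w = w) → w = 0) {N : ℕ}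
    (w : O ⧸ Ideal.span {π ^ N}) (hw : ∀ g : G, (ρ g : O) • w = w) : w = 0 := by
  obtain ⟨a, rfl⟩ := mk_surjective _ w
  refine (mk_eq_zero _).mpr (mem_span_pow_of_forall_units_mul_sub_mem ρ hπ hH0 N fun g => ?_)
  rw [← smul_eq_mul, ← Submodule.Quotient.eq, mk_smul]
  exact hw g

theorem mem_range_nuMap_of_forall_smul_sub_mem (hπ : π ≠ 0)
    (hH0 : ∀ w : O ⧸ Ideal.span {π}, (∀ g : G, (ρ g : O) • w = w) → w = 0) {N₁ N₂ : ℕ}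
    (h : N₁ ≤ N₂) (w : O ⧸ Ideal.span {π ^ N₂})
    (hw : ∀ g : G, (ρ g : O) • w - w ∈ LinearMap.range (nuMap π N₁ N₂ h)) :
    w ∈ LinearMap.range (nuMap π N₁ N₂ h) := by
  simp only [mem_range_nuMap_iff hπ h, smul_sub, sub_eq_zero] at hw ⊢
  refine eq_zero_of_forall_smul_eq_self ρ hπ hH0 _ fun g => ?_
  rw [smul_comm, hw g]

theorem exists_cocycle_nuMap_add_coboundary (hπ : π ≠ 0)
    (hH0 : ∀ w : O ⧸ Ideal.span {π}, (∀ g : G, (ρ g : O) • w = w) → w = 0) {N₁ N₂ : ℕ}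
    (h : N₁ ≤ N₂) (F : G → O ⧸ Ideal.span {π ^ N₂})
    (hF : ∀ g h : G, F (g * h) = F g + (ρ g : O) • F h) (w : O ⧸ Ideal.span {π ^ N₂})
    (hw : ∀ g : G, (π ^ N₁ : O) • F g = (ρ g : O) • w - w) :
    ∃ (f : G → O ⧸ Ideal.span {π ^ N₁}) (v : O ⧸ Ideal.span {π ^ N₂}),
      (∀ g h : G, f (g * h) = f g + (ρ g : O) • f h) ∧
      ∀ g : G, F g = nuMap π N₁ N₂ h (f g) + ((ρ g : O) • v - v) := by
  -- `w` is divisible by `π ^ N₁`, because its coboundary is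
  obtain ⟨v, rfl⟩ : w ∈ LinearMap.range (nuMap π (N₂ - N₁) N₂ (N₂.sub_le N₁)) := by
    refine mem_range_nuMap_of_forall_smul_sub_mem ρ hπ hH0 _ w fun g => ?_
    rw [mem_range_nuMap_iff hπ, ← hw, smul_smul, ← pow_add, Nat.sub_add_cancel h,
      pow_smul_quotient_span_pow]
  obtain ⟨c, rfl⟩ := mk_surjective _ v
  rw [nuMap_mk, Nat.sub_sub_self h] at hw
  have hν : ∀ g : G, F g - ((ρ g : O) • mk c - mk c) ∈ LinearMap.range (nuMap π N₁ N₂ h) := by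
    intro g
    rw [mem_range_nuMap_iff hπ, smul_sub, hw, smul_sub, smul_comm, sub_self]
  choose f hf using hν
  refine ⟨f, mk c, fun g g' => nuMap_injective hπ h ?_, fun g => by rw [hf]; abel⟩
  rw [map_add, map_smul, hf, hf, hf, hF, map_mul, Units.val_mul, mul_smul, smul_sub, smul_sub]
  abel

end

theorem cohomology_reduction_torsion_general
    {O : Type*} [CommRing O] [IsDomain O]
    (π : O) (hπ : Irreducible π) (N₁ N₂ : ℕ) (h12 : N₁ ≤ N₂)
    {G : Type*} [Group G] (ρ : G →* Oˣ)
    (hH0 : ∀ w : O ⧸ Ideal.span {π}, (∀ g : G, (ρ g : O) • w = w) → w = 0) :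
    -- `H¹(ν)` is injective
    (∀ f : G → O ⧸ Ideal.span {π ^ N₁},
      (∀ g h : G, f (g * h) = f g + (ρ g : O) • f h) →
      (∃ w, ∀ g : G, nuMap π N₁ N₂ h12 (f g) = (ρ g : O) • w - w) →
      ∃ w, ∀ g : G, f g = (ρ g : O) • w - w) ∧
    -- the image of `H¹(ν)` is killed by `π^{N₁}`
    (∀ f : G → O ⧸ Ideal.span {π ^ N₁},
      (∀ g h : G, f (g * h) = f g + (ρ g : O) • f h) →
      ∀ g : G, (π ^ N₁ : O) • nuMap π N₁ N₂ h12 (f g) = 0) ∧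
    -- every `π^{N₁}`-torsion class comes from `H¹(G, O/π^{N₁})`
    (∀ F : G → O ⧸ Ideal.span {π ^ N₂},
      (∀ g h : G, F (g * h) = F g + (ρ g : O) • F h) →
      (∃ w, ∀ g : G, (π ^ N₁ : O) • F g = (ρ g : O) • w - w) →
      ∃ (f : G → O ⧸ Ideal.span {π ^ N₁}) (w : O ⧸ Ideal.span {π ^ N₂}),
        (∀ g h : G, f (g * h) = f g + (ρ g : O) • f h) ∧
        ∀ g : G, F g = nuMap π N₁ N₂ h12 (f g) + ((ρ g : O) • w - w)) := by
  have hπ0 : π ≠ 0 := hπ.ne_zero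
  refine ⟨fun f _ ⟨w, hw⟩ => ?_, fun f _ g => ?_, fun F hF ⟨w, hw⟩ =>
    exists_cocycle_nuMap_add_coboundary ρ hπ0 hH0 h12 F hF w hw⟩
  · obtain ⟨v, rfl⟩ := mem_range_nuMap_of_forall_smul_sub_mem ρ hπ0 hH0 h12 w
      fun g => hw g ▸ LinearMap.mem_range_self _ _
    exact ⟨v, fun g => nuMap_injective hπ0 h12 (by rw [hw, map_sub, map_smul])⟩
  · exact (mem_range_nuMap_iff hπ0 h12 _).mp (LinearMap.mem_range_self _ _)

/-- Let `O` be a complete DVR with uniformizer `π`, `N₁ ≤ N₂`, and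
`ν : O/π^{N₁} O → O/π^{N₂} O`, `a ↦ a·π^{N₂−N₁}`.  Let `G` be a (profinite) group and `ρ`
an `O^×`-valued character of `G` with `H⁰(G, (O/π O)(ρ)) = 0`.  Then the induced map
`H¹(ν) : H¹(G, (O/π^{N₁} O)(ρ)) → H¹(G, (O/π^{N₂} O)(ρ))` is injective, and its image is
the `π^{N₁}`-torsion submodule: `H¹(G, (O/π^{N₁})(ρ)) ≅ H¹(G, (O/π^{N₂})(ρ))[π^{N₁}]`.
Cohomology is presented by `1`-cocycles modulo coboundaries. -/
theorem cohomology_reduction_torsion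
    {O : Type*} [CommRing O] [IsDomain O] [IsDiscreteValuationRing O]
    [IsAdicComplete (IsLocalRing.maximalIdeal O) O]
    (π : O) (hπ : Irreducible π) (N₁ N₂ : ℕ) (h12 : N₁ ≤ N₂) (h1 : 0 < N₁)
    {G : Type*} [Group G] (ρ : G →* Oˣ)
    (hH0 : ∀ w : O ⧸ Ideal.span {π}, (∀ g : G, (ρ g : O) • w = w) → w = 0) :
    -- `H¹(ν)` is injective
    (∀ f : G → O ⧸ Ideal.span {π ^ N₁},
      (∀ g h : G, f (g * h) = f g + (ρ g : O) • f h) →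
      (∃ w, ∀ g : G, nuMap π N₁ N₂ h12 (f g) = (ρ g : O) • w - w) →
      ∃ w, ∀ g : G, f g = (ρ g : O) • w - w) ∧
    -- the image of `H¹(ν)` is killed by `π^{N₁}`
    (∀ f : G → O ⧸ Ideal.span {π ^ N₁},
      (∀ g h : G, f (g * h) = f g + (ρ g : O) • f h) →
      ∀ g : G, (π ^ N₁ : O) • nuMap π N₁ N₂ h12 (f g) = 0) ∧
    -- every `π^{N₁}`-torsion class comes from `H¹(G, O/π^{N₁})`
    (∀ F : G → O ⧸ Ideal.span {π ^ N₂},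
      (∀ g h : G, F (g * h) = F g + (ρ g : O) • F h) →
      (∃ w, ∀ g : G, (π ^ N₁ : O) • F g = (ρ g : O) • w - w) →
      ∃ (f : G → O ⧸ Ideal.span {π ^ N₁}) (w : O ⧸ Ideal.span {π ^ N₂}),
        (∀ g h : G, f (g * h) = f g + (ρ g : O) • f h) ∧
        ∀ g : G, F g = nuMap π N₁ N₂ h12 (f g) + ((ρ g : O) • w - w)) :=
  cohomology_reduction_torsion_general π hπ N₁ N₂ h12 ρ hH0
end
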